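/- arXiv:2009.12793 — 5 statements merged into one kernel-verified Lean document; each statement's English description precedes it below -/
import Mathlib

section
/- Define g : ℝ → ℝ by g(t) = exp(−t^{−β}) for t > 0 and g(t) = 0 for t ≤ 0, where β > 0. Then there exists a constant θ > 0 depending only on β such that for all k ∈ ℕ and all t ∈ ℝ, |g^{(k)}(t)| ≤ k! · (2k/(e·β·θ^β))^{k/β}. -/
noncomputable def gfun (β : ℝ) (t : ℝ) : ℝ :=
  if 0 < t then Real.exp (-(t ^ (-β))) else 0

/-!
For `t > 0`, `gfun β` is the restriction of `G z = exp (-z ^ (-β))`, holomorphic on the slit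
plane. On the closed disc of radius `θ t` about `t`, with `θ = (2 + 6β)⁻¹`, writing
`z = t (1 + w)` gives `(1 + w) ^ (-β) ≈ 1`, hence `Re z ^ (-β) ≥ t ^ (-β) / 2` and
`|G| ≤ exp (-t ^ (-β) / 2)`. Cauchy's estimate then gives
`|g⁽ᵏ⁾ t| ≤ k! exp (-t ^ (-β) / 2) / (θ t) ^ k`, and maximising `x ^ (k / β) exp (-x / 2)` over
`x = t ^ (-β)` yields the bound. The same estimate shows `g⁽ᵏ⁾ s / s → 0` as `s → 0⁺`, so all
derivatives of `g` vanish on `t ≤ 0`.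
-/

open Filter Topology Metric

theorem rpow_mul_exp_neg_mul_le {a c x : ℝ} (ha : 0 < a) (hc : 0 < c) (hx : 0 ≤ x) :
    x ^ a * Real.exp (-(c * x)) ≤ (a / (c * Real.exp 1)) ^ a := by
  set y := c * x / a with hy
  have hy0 : 0 ≤ y := by positivity
  have hx_eq : x = a / c * y := by rw [hy]; field_simp
  have hy_pow : y ^ a ≤ Real.exp (c * x) / Real.exp a := by
    calc y ^ a ≤ Real.exp (y - 1) ^ a := by
          gcongr
          linarith [Real.add_one_le_exp (y - 1)]
      _ = Real.exp (c * x) / Real.exp a := by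
          rw [← Real.exp_mul, ← Real.exp_sub, hy]
          congr 1
          field_simp
  calc x ^ a * Real.exp (-(c * x)) = (a / c) ^ a * y ^ a * Real.exp (-(c * x)) := by
        rw [hx_eq, Real.mul_rpow (by positivity) hy0]
    _ ≤ (a / c) ^ a * (Real.exp (c * x) / Real.exp a) * Real.exp (-(c * x)) := by gcongr
    _ = (a / (c * Real.exp 1)) ^ a := by
        rw [← div_div, Real.div_rpow (by positivity) (Real.exp_pos 1).le, Real.exp_one_rpow,
          Real.exp_neg]
        field_simp

theorem exp_neg_rpow_div_pow_le {β θ t : ℝ} (hβ : 0 < β) (hθ : 0 < θ) (ht : 0 < t) {k : ℕ}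
    (hk : 0 < k) :
    Real.exp (-(t ^ (-β) / 2)) / (θ * t) ^ k ≤
      (2 * k / (Real.exp 1 * β * θ ^ β)) ^ ((k : ℝ) / β) := by
  have hpow : ∀ x : ℝ, 0 < x → (x ^ β) ^ ((k : ℝ) / β) = x ^ k := fun x hx => by
    rw [← Real.rpow_mul hx.le, mul_div_cancel₀ _ hβ.ne', Real.rpow_natCast]
  have ht' : (t ^ (-β)) ^ ((k : ℝ) / β) = (t ^ k)⁻¹ := by
    rw [Real.rpow_neg ht.le, Real.inv_rpow (by positivity), hpow t ht]
  calc Real.exp (-(t ^ (-β) / 2)) / (θ * t) ^ k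
      = (t ^ (-β)) ^ ((k : ℝ) / β) * Real.exp (-(1 / 2 * t ^ (-β))) / θ ^ k := by
        rw [ht', mul_pow]; field_simp
    _ ≤ ((k / β) / (1 / 2 * Real.exp 1)) ^ ((k : ℝ) / β) / θ ^ k := by
        gcongr
        exact rpow_mul_exp_neg_mul_le (by positivity) (by norm_num) (by positivity)
    _ = (2 * k / (Real.exp 1 * β * θ ^ β)) ^ ((k : ℝ) / β) := by
        rw [← hpow θ hθ, ← Real.div_rpow (by positivity) (by positivity)]
        congr 1
        field_simp

theorem tendsto_exp_neg_mul_rpow_neg_div_pow {β c : ℝ} (hβ : 0 < β) (hc : 0 < c) (n : ℕ) :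
    Tendsto (fun s : ℝ => Real.exp (-(c * s ^ (-β))) / s ^ n) (𝓝[>] 0) (𝓝 0) := by
  have hpow : Tendsto (fun s : ℝ => s ^ (-β)) (𝓝[>] 0) atTop := by
    refine ((tendsto_rpow_atTop hβ).comp tendsto_inv_nhdsGT_zero).congr' ?_
    filter_upwards [self_mem_nhdsWithin] with s (hs : 0 < s)
    simp [Real.inv_rpow hs.le, Real.rpow_neg hs.le]
  refine ((tendsto_rpow_mul_exp_neg_mul_atTop_nhds_zero (n / β) c hc).comp hpow).congr' ?_
  filter_upwards [self_mem_nhdsWithin] with s (hs : 0 < s)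
  rw [Function.comp_apply, ← Real.rpow_mul hs.le, neg_mul, mul_div_cancel₀ _ hβ.ne',
    Real.rpow_neg hs.le, Real.rpow_natCast, neg_mul, div_eq_inv_mul]

theorem hasDerivAt_zero_of_forall_nonpos_eq_zero {f : ℝ → ℝ} (hf : ∀ t ≤ 0, f t = 0)
    (hdecay : Tendsto (fun s => f s / s) (𝓝[>] 0) (𝓝 0)) {t : ℝ} (ht : t ≤ 0) :
    HasDerivAt f 0 t := by
  rcases ht.lt_or_eq with ht | rfl
  · refine (hasDerivAt_const t (0 : ℝ)).congr_of_eventuallyEq ?_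
    filter_upwards [Iio_mem_nhds ht] with s hs using hf s hs.le
  rw [hasDerivAt_iff_tendsto_slope, ← nhdsLT_sup_nhdsGT, tendsto_sup]
  constructor
  · refine tendsto_const_nhds.congr' ?_
    filter_upwards [self_mem_nhdsWithin] with s (hs : s < 0)
    simp [slope_def_field, hf s hs.le, hf 0 le_rfl]
  · refine hdecay.congr' ?_
    filter_upwards [self_mem_nhdsWithin] with s hs
    simp [slope_def_field, hf 0 le_rfl]

theorem iteratedDeriv_eq_zero_of_forall_nonpos_eq_zero {f : ℝ → ℝ} (hf : ∀ t ≤ 0, f t = 0)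
    (hdecay : ∀ k, Tendsto (fun s => iteratedDeriv k f s / s) (𝓝[>] 0) (𝓝 0)) (k : ℕ) :
    ∀ t ≤ 0, iteratedDeriv k f t = 0 := by
  induction k with
  | zero => simpa using hf
  | succ k ih =>
    intro t ht
    rw [iteratedDeriv_succ]
    exact (hasDerivAt_zero_of_forall_nonpos_eq_zero ih (hdecay k) ht).deriv

theorem iteratedDeriv_eq_re_iteratedDeriv {f : ℝ → ℝ} {F : ℂ → ℂ} {V : Set ℂ} (hV : IsOpen V)
    (hF : DifferentiableOn ℂ F V) (hfF : ∀ x : ℝ, (x : ℂ) ∈ V → f x = (F x).re) (k : ℕ) :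
    ∀ x : ℝ, (x : ℂ) ∈ V → iteratedDeriv k f x = (iteratedDeriv k F x).re := by
  induction k with
  | zero => simpa using hfF
  | succ k ih =>
    intro x hx
    have hU : ∀ᶠ y : ℝ in 𝓝 x, (y : ℂ) ∈ V :=
      Complex.continuous_ofReal.continuousAt.preimage_mem_nhds (hV.mem_nhds hx)
    have hdiff : DifferentiableAt ℂ (iteratedDeriv k F) x := by
      rw [iteratedDeriv_eq_iterate]
      exact ((hF.analyticOnNhd hV).iterated_deriv k x hx).differentiableAt
    rw [iteratedDeriv_succ, iteratedDeriv_succ]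
    refine (hdiff.hasDerivAt.real_of_complex.congr_of_eventuallyEq ?_).deriv
    filter_upwards [hU] with y hy using ih y hy

theorem norm_one_add_cpow_sub_one_le {w : ℂ} {a : ℝ} (hw : ‖w‖ ≤ 1 / 2)
    (haw : |a| * ‖w‖ ≤ 2 / 3) : ‖(1 + w) ^ (a : ℂ) - 1‖ ≤ 3 * |a| * ‖w‖ := by
  have hw0 : 1 + w ≠ 0 :=
    Complex.slitPlane_ne_zero (Complex.mem_slitPlane_of_norm_lt_one (by linarith))
  have hlog : ‖Complex.log (1 + w) * a‖ ≤ 3 / 2 * ‖w‖ * |a| := by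
    rw [norm_mul, Complex.norm_real, Real.norm_eq_abs]
    gcongr
    exact Complex.norm_log_one_add_half_le_self hw
  rw [Complex.cpow_def_of_ne_zero hw0]
  calc ‖Complex.exp (Complex.log (1 + w) * a) - 1‖ ≤ 2 * ‖Complex.log (1 + w) * a‖ :=
        Complex.norm_exp_sub_one_le (by linarith)
    _ ≤ 3 * |a| * ‖w‖ := by linarith

theorem half_rpow_le_re_cpow {a θ t : ℝ} (hθ : θ ≤ 1 / 2) (haθ : 6 * |a| * θ ≤ 1)
    (ht : 0 < t) {z : ℂ} (hz : z ∈ closedBall (t : ℂ) (θ * t)) :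
    t ^ a / 2 ≤ (z ^ (a : ℂ)).re := by
  set w := z / t - 1
  have ht0 : (t : ℂ) ≠ 0 := by exact_mod_cast ht.ne'
  have hw : ‖w‖ ≤ θ := by
    rw [mem_closedBall, dist_eq_norm] at hz
    rw [show w = (z - t) / t by simp [w]; field_simp, norm_div, Complex.norm_real,
      Real.norm_of_nonneg ht.le, div_le_iff₀ ht]
    exact hz
  have hcpow : z ^ (a : ℂ) = (t ^ a : ℝ) * (1 + w) ^ (a : ℂ) := by
    have hw0 : 1 + w ≠ 0 := Complex.slitPlane_ne_zero
      (Complex.mem_slitPlane_of_norm_lt_one (by linarith))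
    rw [show z = t * (1 + w) by simp [w]; field_simp, Complex.ofReal_cpow ht.le,
      Complex.cpow_def_of_ne_zero (mul_ne_zero ht0 hw0), Complex.log_ofReal_mul ht hw0, add_mul,
      Complex.exp_add, Complex.ofReal_log ht.le, ← Complex.cpow_def_of_ne_zero ht0,
      ← Complex.cpow_def_of_ne_zero hw0]
  have hnear := norm_one_add_cpow_sub_one_le (a := a) (hw.trans hθ)
    (by nlinarith [norm_nonneg w, abs_nonneg a])
  have hre : 1 / 2 ≤ ((1 + w) ^ (a : ℂ)).re := by
    have := (Complex.abs_re_le_norm _).trans hnear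
    rw [Complex.sub_re, Complex.one_re, abs_le] at this
    nlinarith [norm_nonneg w, abs_nonneg a]
  rw [hcpow, Complex.re_ofReal_mul]
  have := Real.rpow_pos_of_pos ht a
  nlinarith

theorem closedBall_ofReal_subset_slitPlane {t r : ℝ} (hr : r < t) :
    closedBall (t : ℂ) r ⊆ Complex.slitPlane := by
  intro z hz
  rw [mem_closedBall, dist_eq_norm] at hz
  have := (Complex.re_le_norm (t - z)).trans (norm_sub_rev z t ▸ hz)
  rw [Complex.sub_re, Complex.ofReal_re] at this
  exact Complex.mem_slitPlane_iff.2 (Or.inl (by linarith))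

noncomputable def gfunComplex (β : ℝ) (z : ℂ) : ℂ :=
  Complex.exp (-z ^ ((-β : ℝ) : ℂ))

theorem gfun_eq_re_gfunComplex (β : ℝ) (x : ℝ) (hx : (x : ℂ) ∈ Complex.slitPlane) :
    gfun β x = (gfunComplex β x).re := by
  have hx : 0 < x := Complex.ofReal_mem_slitPlane.1 hx
  rw [gfun, if_pos hx, gfunComplex, ← Complex.ofReal_cpow hx.le, ← Complex.ofReal_neg,
    ← Complex.ofReal_exp, Complex.ofReal_re]

theorem differentiableOn_gfunComplex (β : ℝ) :
    DifferentiableOn ℂ (gfunComplex β) Complex.slitPlane := fun _ hz =>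
  ((differentiableAt_id.cpow_const hz).neg.cexp).differentiableWithinAt

theorem norm_iteratedDeriv_gfunComplex_le {β θ t : ℝ} (hθ0 : 0 < θ) (hθ : θ ≤ 1 / 2)
    (hβθ : 6 * |β| * θ ≤ 1) (ht : 0 < t) (k : ℕ) :
    ‖iteratedDeriv k (gfunComplex β) t‖ ≤
      k.factorial * Real.exp (-(t ^ (-β) / 2)) / (θ * t) ^ k := by
  refine Complex.norm_iteratedDeriv_le_of_forall_mem_sphere_norm_le k (by positivity)
    ((differentiableOn_gfunComplex β).diffContOnCl_ball
      (closedBall_ofReal_subset_slitPlane (by nlinarith))) fun z hz => ?_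
  rw [gfunComplex, Complex.norm_exp, Complex.neg_re, Real.exp_le_exp, neg_le_neg_iff]
  exact half_rpow_le_re_cpow hθ (by rwa [abs_neg]) ht (sphere_subset_closedBall hz)

/-- Chosen so that `θ ≤ 1 / 2` and `6 β θ ≤ 1`, as `half_rpow_le_re_cpow` requires. -/
noncomputable def johnRadius (β : ℝ) : ℝ := (2 + 6 * β)⁻¹

theorem johnRadius_pos {β : ℝ} (hβ : 0 ≤ β) : 0 < johnRadius β := by
  unfold johnRadius; positivity

theorem abs_iteratedDeriv_gfun_le {β t : ℝ} (hβ : 0 ≤ β) (ht : 0 < t) (k : ℕ) :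
    |iteratedDeriv k (gfun β) t| ≤
      k.factorial * Real.exp (-(t ^ (-β) / 2)) / (johnRadius β * t) ^ k := by
  have hθ : johnRadius β ≤ 1 / 2 := by
    unfold johnRadius; rw [inv_le_comm₀ (by positivity) (by norm_num)]; linarith
  have hβθ : 6 * |β| * johnRadius β ≤ 1 := by
    unfold johnRadius
    rw [abs_of_nonneg hβ, ← div_eq_mul_inv, div_le_one (by positivity)]
    linarith
  rw [iteratedDeriv_eq_re_iteratedDeriv Complex.isOpen_slitPlane (differentiableOn_gfunComplex β)
    (gfun_eq_re_gfunComplex β) k t (Complex.ofReal_mem_slitPlane.2 ht)]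
  exact (Complex.abs_re_le_norm _).trans
    (norm_iteratedDeriv_gfunComplex_le (johnRadius_pos hβ) hθ hβθ ht k)

theorem iteratedDeriv_gfun_of_nonpos {β t : ℝ} (hβ : 0 < β) (k : ℕ) (ht : t ≤ 0) :
    iteratedDeriv k (gfun β) t = 0 := by
  refine iteratedDeriv_eq_zero_of_forall_nonpos_eq_zero (fun s hs => if_neg (not_lt.2 hs))
    (fun k => ?_) k t ht
  have hθ0 := johnRadius_pos hβ.le
  have hdecay := (tendsto_exp_neg_mul_rpow_neg_div_pow hβ one_half_pos (k + 1)).const_mul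
    (k.factorial / johnRadius β ^ k)
  rw [mul_zero] at hdecay
  refine squeeze_zero_norm' ?_ hdecay
  filter_upwards [self_mem_nhdsWithin] with s (hs : 0 < s)
  rw [Real.norm_eq_abs, abs_div, abs_of_pos hs]
  calc |iteratedDeriv k (gfun β) s| / s
      ≤ k.factorial * Real.exp (-(s ^ (-β) / 2)) / (johnRadius β * s) ^ k / s := by
        gcongr; exact abs_iteratedDeriv_gfun_le hβ.le hs k
    _ = _ := by rw [mul_pow, pow_succ]; field_simp

/-- John's estimate: there is `θ > 0` depending only on `β` such that
`|g^{(k)}(t)| ≤ k! · (2k/(e·β·θ^β))^{k/β}` for all `k ≥ 1` and all `t ∈ ℝ`. -/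
theorem gfun_derivative_bound (β : ℝ) (hβ : 0 < β) :
    ∃ θ : ℝ, 0 < θ ∧ ∀ k : ℕ, 1 ≤ k → ∀ t : ℝ,
      |iteratedDeriv k (gfun β) t| ≤
        (Nat.factorial k : ℝ) *
          (2 * k / (Real.exp 1 * β * θ ^ β)) ^ ((k : ℝ) / β) := by
  have hθ0 := johnRadius_pos hβ.le
  refine ⟨johnRadius β, hθ0, fun k hk t => ?_⟩
  rcases le_or_gt t 0 with ht | ht
  · rw [iteratedDeriv_gfun_of_nonpos hβ k ht, abs_zero]
    positivity
  calc |iteratedDeriv k (gfun β) t|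
      ≤ k.factorial * (Real.exp (-(t ^ (-β) / 2)) / (johnRadius β * t) ^ k) := by
        rw [← mul_div_assoc]; exact abs_iteratedDeriv_gfun_le hβ.le ht k
    _ ≤ _ := by gcongr; exact exp_neg_rpow_div_pow_le hβ hθ0 ht hk
end

section
/- Let ℤ be the infinite line graph with unit weights (μ_x = 1, ω_{xy} = 1 for |x−y| = 1), so Δu(x) = u(x+1) + u(x−1) − 2u(x). There exists a function u : ℝ × ℤ → ℝ with u(·,x) ∈ C²(ℝ) for each x ∈ ℤ, satisfying ∂_t² u(t,x) = Δu(t,x) for all (t,x) ∈ ℝ × ℤ, with u(0,x) = 0 and ∂_t u(0,x) = 0 for all x ∈ ℤ, but u ≢ 0. -/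
open Real

noncomputable def vv : ℕ → ℝ → ℝ
  | 0 => expNegInvGlue
  | 1 => fun t => expNegInvGlue t + deriv (deriv expNegInvGlue) t / 2
  | (n+2) => fun t => deriv (deriv (vv (n+1))) t + 2 * vv (n+1) t - vv n t

lemma vv_smooth : ∀ n, ContDiff ℝ ((⊤:ℕ∞):WithTop ℕ∞) (vv n) := by
  have key : ∀ f : ℝ → ℝ, ContDiff ℝ ((⊤:ℕ∞):WithTop ℕ∞) f → ContDiff ℝ ((⊤:ℕ∞):WithTop ℕ∞) (deriv f) := fun f hf =>
    (contDiff_infty_iff_deriv.mp hf).2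
  intro n
  induction n using Nat.strong_induction_on with
  | _ n ih =>
    match n with
    | 0 => exact expNegInvGlue.contDiff
    | 1 =>
      exact expNegInvGlue.contDiff.add ((key _ (key _ expNegInvGlue.contDiff)).div_const 2)
    | (m+2) =>
      have h1 := ih (m+1) (by omega)
      have h0 := ih m (by omega)
      exact ((key _ (key _ h1)).add (contDiff_const.mul h1)).sub h0

lemma deriv_zero_of_neg {f : ℝ → ℝ} (h : ∀ s < 0, f s = 0) {t : ℝ} (ht : t < 0) :
    deriv f t = 0 := by
  have he : f =ᶠ[nhds t] (fun _ => (0:ℝ)) := by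
    filter_upwards [Iio_mem_nhds ht] with s hs using h s hs
  rw [he.deriv_eq]; simp

lemma vv_zero_neg : ∀ n, ∀ t < 0, vv n t = 0 := by
  intro n
  induction n using Nat.strong_induction_on with
  | _ n ih =>
    match n with
    | 0 => exact fun t ht => expNegInvGlue.zero_of_nonpos ht.le
    | 1 =>
      intro t ht
      have h0 : ∀ s < (0:ℝ), expNegInvGlue s = 0 := fun s hs => expNegInvGlue.zero_of_nonpos hs.le
      have h1 : ∀ s < (0:ℝ), deriv expNegInvGlue s = 0 := fun s hs => deriv_zero_of_neg h0 hs
      show expNegInvGlue t + deriv (deriv expNegInvGlue) t / 2 = 0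
      rw [h0 t ht, deriv_zero_of_neg h1 ht]; ring
    | (m+2) =>
      intro t ht
      have h1 := ih (m+1) (by omega)
      have h0 := ih m (by omega)
      have hd : ∀ s < (0:ℝ), deriv (vv (m+1)) s = 0 := fun s hs => deriv_zero_of_neg h1 hs
      show deriv (deriv (vv (m+1))) t + 2 * vv (m+1) t - vv m t = 0
      rw [deriv_zero_of_neg hd ht, h1 t ht, h0 t ht]; ring

lemma vv_zero_nonpos (n : ℕ) {t : ℝ} (ht : t ≤ 0) : vv n t = 0 := by
  have hcl : closure (Set.Iio (0:ℝ)) ⊆ {t | vv n t = 0} :=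
    closure_minimal (fun s hs => vv_zero_neg n s hs)
      (isClosed_eq (vv_smooth n).continuous continuous_const)
  rw [closure_Iio] at hcl
  exact hcl ht

lemma deriv_vv_zero (n : ℕ) : deriv (vv n) 0 = 0 := by
  have hd : ∀ s < (0:ℝ), deriv (vv n) s = 0 := fun s hs =>
    deriv_zero_of_neg (fun s hs => vv_zero_neg n s hs) hs
  have hcont : Continuous (deriv (vv n)) :=
    ((contDiff_infty_iff_deriv.mp (vv_smooth n)).2).continuous
  have hcl : closure (Set.Iio (0:ℝ)) ⊆ {t | deriv (vv n) t = 0} :=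
    closure_minimal (fun s hs => hd s hs) (isClosed_eq hcont continuous_const)
  rw [closure_Iio] at hcl
  exact hcl Set.self_mem_Iic

lemma vv_eq (m : ℕ) (t : ℝ) :
    deriv (deriv (vv (m+1))) t = vv (m+2) t + vv m t - 2 * vv (m+1) t := by
  show deriv (deriv (vv (m+1))) t = (deriv (deriv (vv (m+1))) t + 2 * vv (m+1) t - vv m t) + vv m t - 2 * vv (m+1) t
  ring

lemma vv_eq0 (t : ℝ) : deriv (deriv (vv 0)) t = 2 * vv 1 t - 2 * vv 0 t := by
  show deriv (deriv expNegInvGlue) t = 2 * (expNegInvGlue t + deriv (deriv expNegInvGlue) t / 2) - 2 * expNegInvGlue t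
  ring

/-- non-uniqueness for the wave equation on the integer line graph
(`Δu(x) = u(x+1) + u(x−1) − 2u(x)`): there is a nontrivial `C²`-in-time solution
with zero initial data. -/
theorem wave_nonuniqueness_line_graph :
    ∃ u : ℝ → ℤ → ℝ,
      (∀ x : ℤ, ContDiff ℝ 2 (fun t => u t x)) ∧
      (∀ (t : ℝ) (x : ℤ),
        iteratedDeriv 2 (fun s => u s x) t
          = u t (x + 1) + u t (x - 1) - 2 * u t x) ∧
      (∀ x : ℤ, u 0 x = 0) ∧
      (∀ x : ℤ, deriv (fun s => u s x) 0 = 0) ∧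
      ∃ (t : ℝ) (x : ℤ), u t x ≠ 0 := by
  refine ⟨fun t x => vv x.natAbs t, ?_, ?_, ?_, ?_, ⟨1, 0, ?_⟩⟩
  · exact fun x => (vv_smooth x.natAbs).of_le (by norm_cast)
  · intro t x
    have hiter : iteratedDeriv 2 (vv x.natAbs) t = deriv (deriv (vv x.natAbs)) t := by
      rw [show (2:ℕ) = 0 + 1 + 1 from rfl, iteratedDeriv_succ, iteratedDeriv_succ,
        iteratedDeriv_zero]
    show iteratedDeriv 2 (vv x.natAbs) t =
      vv (x+1).natAbs t + vv (x-1).natAbs t - 2 * vv x.natAbs t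
    rw [hiter]
    rcases lt_trichotomy x 0 with hx | hx | hx
    · have e1 : (x+1).natAbs = x.natAbs - 1 := by omega
      have e2 : (x-1).natAbs = x.natAbs + 1 := by omega
      obtain ⟨m, hm⟩ : ∃ m, x.natAbs = m + 1 := ⟨x.natAbs - 1, by omega⟩
      rw [e1, e2, hm]
      simp only [Nat.add_sub_cancel]
      rw [vv_eq m t]
      show vv (m + 2) t + vv m t - 2 * vv (m + 1) t
        = vv m t + vv (m + 2) t - 2 * vv (m + 1) t
      ring
    · subst hx
      norm_num [vv_eq0 t]
      ring
    · have e1 : (x+1).natAbs = x.natAbs + 1 := by omega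
      have e2 : (x-1).natAbs = x.natAbs - 1 := by omega
      obtain ⟨m, hm⟩ : ∃ m, x.natAbs = m + 1 := ⟨x.natAbs - 1, by omega⟩
      rw [e1, e2, hm]
      simp only [Nat.add_sub_cancel]
      rw [vv_eq m t]
  · exact fun x => vv_zero_nonpos x.natAbs le_rfl
  · exact fun x => deriv_vv_zero x.natAbs
  · show vv 0 1 ≠ 0
    exact (expNegInvGlue.pos_of_pos one_pos).ne'
end

section
/- Let ℤ be the infinite line graph with unit weights. For any ε > 0, there exists a nontrivial solution u(t,x) of ∂_t² u = Δu on ℝ × ℤ with u(0,x) = ∂_t u(0,x) = 0 for all x, such that lim_{|x|→∞} |u(t,x)| · e^{−(2+ε)|x| ln|x|} = 0 for every fixed t ∈ ℝ, and u(·,0) is not real-analytic at t = 0. -/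
/-!
Let `f = expNegInvGlue`: it is smooth, vanishes on `(-∞, 0]`, and is analytic on `(0, ∞)` but not
at `0`. Put `u(t, x) = T_x(1 + D²/2) f (t)`, where `T_x` is the Chebyshev polynomial of the first
kind and `D = d/dt`. The recurrence `T_{x+1} + T_{x-1} = 2 y T_x` at `y = 1 + D²/2` gives
`Δu = (2y - 2) u = D² u`, and `u` vanishes for `t ≤ 0` along with `f`. The polynomial `T_x(1 + X/2)`
has degree `|x|` and coefficients at most `4^|x|`, so at `t > 0` Cauchy's estimates
`|f⁽ᵏ⁾(t)| ≤ A Bᵏ k!` give `|u(t, x)| ≤ A C^|x| (2|x|)!`, which is `o(e^{(2+ε)|x| ln |x|})`.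
-/

open Polynomial Filter Topology Real
open scoped ContDiff Nat

theorem iteratedDeriv_eq_zero_of_eqOn_Iic {h : ℝ → ℝ} {a t : ℝ} {n : ℕ} (hh : ContDiff ℝ n h)
    (h0 : Set.EqOn h 0 (Set.Iic a)) (ht : t ≤ a) : iteratedDeriv n h t = 0 := by
  rw [← iteratedDerivWithin_eq_iteratedDeriv (uniqueDiffOn_Iic a) hh.contDiffAt ht,
    iteratedDerivWithin_congr h0 ht]
  exact iteratedDerivWithin_const_zero

theorem expNegInvGlue.analyticAt_of_pos {t : ℝ} (ht : 0 < t) : AnalyticAt ℝ expNegInvGlue t := by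
  refine (analyticAt_id.inv ht.ne').neg.rexp.congr ?_
  filter_upwards [lt_mem_nhds ht] with s hs
  simp [expNegInvGlue, hs.not_ge]

theorem AnalyticAt.exists_norm_iteratedDeriv_le {𝕜 F : Type*} [NontriviallyNormedField 𝕜]
    [NormedAddCommGroup F] [NormedSpace 𝕜 F] [CompleteSpace F] {g : 𝕜 → F} {t : 𝕜}
    (hg : AnalyticAt 𝕜 g t) :
    ∃ A B : ℝ, 0 ≤ A ∧ 1 ≤ B ∧ ∀ n, ‖iteratedDeriv n g t‖ ≤ A * B ^ n * n ! := by
  obtain ⟨p, r, hp⟩ := hg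
  obtain ⟨r', hr'0, hr'⟩ := ENNReal.lt_iff_exists_nnreal_btwn.mp hp.radius_pos
  obtain ⟨C, hC, hpC⟩ := p.norm_mul_pow_le_of_lt_radius hr'
  have hr'pos : 0 < (r' : ℝ) := mod_cast hr'0
  refine ⟨C, max 1 (r' : ℝ)⁻¹, hC.le, le_max_left _ _, fun n => ?_⟩
  have hpn : ‖p n‖ ≤ C * (max 1 (r' : ℝ)⁻¹) ^ n := calc
    ‖p n‖ ≤ C * (r' : ℝ)⁻¹ ^ n := by
      rw [inv_pow, ← div_eq_mul_inv, le_div_iff₀ (by positivity)]; exact hpC n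
    _ ≤ C * (max 1 (r' : ℝ)⁻¹) ^ n := by gcongr; exact le_max_right _ _
  calc ‖iteratedDeriv n g t‖ ≤ n ! * ‖p n‖ := by
        rw [iteratedDeriv_eq_iteratedFDeriv, ← hp.factorial_smul, p.norm_apply_eq_norm_coef]
        exact norm_nsmul_le
    _ ≤ C * (max 1 (r' : ℝ)⁻¹) ^ n * n ! := by rw [mul_comm]; gcongr

theorem tendsto_pow_mul_factorial_mul_exp {ε C : ℝ} (hε : 0 < ε) (hC : 0 ≤ C) :
    Tendsto (fun n : ℕ => C ^ n * (2 * n)! * exp (-(2 + ε) * n * log n)) atTop (𝓝 0) := by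
  have hbound : ∀ n : ℕ, 0 < n →
      C ^ n * (2 * n)! * exp (-(2 + ε) * n * log n) ≤ (4 * C * exp (-ε * log n)) ^ n := by
    intro n hn
    have hfact : ((2 * n)! : ℝ) ≤ 4 ^ n * exp (2 * n * log n) := calc
      ((2 * n)! : ℝ) ≤ ((2 * n) ^ (2 * n) : ℕ) := mod_cast Nat.factorial_le_pow _
      _ = 4 ^ n * exp (log n) ^ (2 * n) := by
          rw [exp_log (by positivity)]; push_cast; rw [mul_pow, pow_mul (2 : ℝ)]; norm_num
      _ = 4 ^ n * exp (2 * n * log n) := by rw [← exp_nat_mul]; push_cast; ring_nf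
    calc C ^ n * (2 * n)! * exp (-(2 + ε) * n * log n)
        ≤ C ^ n * (4 ^ n * exp (2 * n * log n)) * exp (-(2 + ε) * n * log n) := by gcongr
      _ = (4 * C) ^ n * exp (n * (-ε * log n)) := by
          rw [mul_assoc, mul_assoc, ← exp_add, mul_pow]; ring_nf
      _ = (4 * C * exp (-ε * log n)) ^ n := by rw [exp_nat_mul, mul_pow (4 * C)]
  have hsmall : Tendsto (fun n : ℕ => 4 * C * exp (-ε * log n)) atTop (𝓝 0) := by
    have hlog : Tendsto (fun n : ℕ => -ε * log n) atTop atBot :=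
      (tendsto_log_atTop.comp tendsto_natCast_atTop_atTop).const_mul_atTop_of_neg (by linarith)
    simpa using (tendsto_exp_atBot.comp hlog).const_mul (4 * C)
  refine squeeze_zero' (Eventually.of_forall fun n => by positivity) ?_
    (tendsto_pow_atTop_nhds_zero_of_lt_one (by norm_num : (0 : ℝ) ≤ 1 / 2) (by norm_num))
  filter_upwards [hsmall.eventually (gt_mem_nhds (by norm_num : (0 : ℝ) < 1 / 2)),
    eventually_gt_atTop 0] with n hn hn0
  exact (hbound n hn0).trans (pow_le_pow_left₀ (by positivity) hn.le n)

theorem Int.tendsto_natAbs_cofinite_atTop : Tendsto Int.natAbs cofinite atTop :=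
  Nat.cofinite_eq_atTop ▸ Tendsto.cofinite_of_finite_preimage_singleton fun n =>
    (Set.finite_Icc (-(n : ℤ)) n).subset fun x hx => by
      rw [Set.mem_preimage, Set.mem_singleton_iff] at hx; rw [Set.mem_Icc]; omega

theorem Polynomial.abs_coeff_X_mul_le {p : ℝ[X]} {M : ℝ} (hM : 0 ≤ M) (hp : ∀ j, |p.coeff j| ≤ M)
    (j : ℕ) : |(X * p).coeff j| ≤ M := by
  cases j with
  | zero => simpa using hM
  | succ j => simpa [coeff_X_mul] using hp j

namespace WaveLineGraph

/-- `evalSqDeriv g p` is `p(D²) g`, where `D = d/dt`. -/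
noncomputable def evalSqDeriv (g : ℝ → ℝ) : ℝ[X] →ₗ[ℝ] ℝ → ℝ :=
  lsum fun j => LinearMap.id.smulRight (iteratedDeriv (2 * j) g)

variable {g : ℝ → ℝ}

theorem evalSqDeriv_apply (p : ℝ[X]) (t : ℝ) :
    evalSqDeriv g p t = p.sum fun j a => a * iteratedDeriv (2 * j) g t := by
  simp [evalSqDeriv, Polynomial.sum_def]

theorem evalSqDeriv_monomial (n : ℕ) (a : ℝ) :
    evalSqDeriv g (monomial n a) = a • iteratedDeriv (2 * n) g := by
  simp [evalSqDeriv]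

theorem contDiff_evalSqDeriv (hg : ContDiff ℝ ∞ g) (p : ℝ[X]) :
    ContDiff ℝ ∞ (evalSqDeriv g p) := by
  induction p using Polynomial.induction_on' with
  | add p q hp hq => rw [map_add]; exact hp.add hq
  | monomial n a =>
    rw [evalSqDeriv_monomial, iteratedDeriv_eq_iterate]
    exact (hg.iterate_deriv _).const_smul a

theorem iteratedDeriv_two_evalSqDeriv (hg : ContDiff ℝ ∞ g) (p : ℝ[X]) :
    iteratedDeriv 2 (evalSqDeriv g p) = evalSqDeriv g (X * p) := by
  induction p using Polynomial.induction_on' with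
  | add p q hp hq =>
    ext t
    have hsmooth (r : ℝ[X]) : ContDiffAt ℝ 2 (evalSqDeriv g r) t :=
      (contDiff_evalSqDeriv hg r).contDiffAt.of_le ENat.LEInfty.out
    rw [mul_add, map_add, map_add, iteratedDeriv_add (hsmooth p) (hsmooth q), hp, hq, Pi.add_apply]
  | monomial n a =>
    ext t
    rw [X_mul_monomial, evalSqDeriv_monomial, evalSqDeriv_monomial, iteratedDeriv_const_smul_field,
      Pi.smul_apply]
    simp only [iteratedDeriv_eq_iterate, ← Function.iterate_add_apply]
    ring_nf

theorem evalSqDeriv_eqOn_zero {a : ℝ} (hg : ContDiff ℝ ∞ g) (h0 : Set.EqOn g 0 (Set.Iic a))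
    (p : ℝ[X]) : Set.EqOn (evalSqDeriv g p) 0 (Set.Iic a) := fun t ht => by
  rw [evalSqDeriv_apply, Pi.zero_apply]
  exact Finset.sum_eq_zero fun j _ => by
    dsimp only
    rw [iteratedDeriv_eq_zero_of_eqOn_Iic (hg.of_le ENat.LEInfty.out) h0 ht, mul_zero]

theorem abs_evalSqDeriv_le {p : ℝ[X]} {t M K : ℝ} {d : ℕ} (hd : p.natDegree ≤ d)
    (hp : ∀ j, |p.coeff j| ≤ M) (hg : ∀ j ≤ d, |iteratedDeriv (2 * j) g t| ≤ K) :
    |evalSqDeriv g p t| ≤ (d + 1) * (M * K) := by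
  rw [evalSqDeriv_apply, sum_over_range' _ (fun _ => zero_mul _) (d + 1) (by omega)]
  calc _ ≤ ∑ j ∈ Finset.range (d + 1), |p.coeff j * iteratedDeriv (2 * j) g t| :=
        Finset.abs_sum_le_sum_abs _ _
    _ ≤ ∑ j ∈ Finset.range (d + 1), M * K := Finset.sum_le_sum fun j hj => by
        rw [abs_mul]
        exact mul_le_mul (hp j) (hg j (by simpa [Nat.lt_succ_iff] using hj)) (abs_nonneg _)
          ((abs_nonneg _).trans (hp j))
    _ = (d + 1) * (M * K) := by simp

theorem evalSqDeriv_one : evalSqDeriv g 1 = g := by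
  rw [← monomial_zero_one, evalSqDeriv_monomial, one_smul, mul_zero, iteratedDeriv_zero]

noncomputable def wavePoly (x : ℤ) : ℝ[X] := (Chebyshev.T ℝ x).comp (1 + C 2⁻¹ * X)

theorem X_mul_wavePoly (x : ℤ) :
    X * wavePoly x = wavePoly (x + 1) + wavePoly (x - 1) - 2 * wavePoly x := by
  have h2 : (2 : ℝ[X]) * C 2⁻¹ = 1 := by rw [← C_ofNat, ← C_mul]; norm_num
  simp only [wavePoly, Chebyshev.T_add_one, sub_comp, mul_comp, X_comp, ofNat_comp]
  linear_combination (-(X * (Chebyshev.T ℝ x).comp (1 + C 2⁻¹ * X))) * h2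

theorem wavePoly_natAbs (x : ℤ) : wavePoly x.natAbs = wavePoly x := by
  rw [wavePoly, Chebyshev.T_natAbs, wavePoly]

theorem wavePoly_zero : wavePoly 0 = 1 := by simp [wavePoly]

theorem natDegree_wavePoly_le (n : ℕ) : (wavePoly n).natDegree ≤ n := by
  calc (wavePoly n).natDegree ≤ (Chebyshev.T ℝ n).natDegree * (1 + C (2⁻¹ : ℝ) * X).natDegree :=
        natDegree_comp_le
    _ ≤ n * 1 := by
        rw [Chebyshev.natDegree_T, Int.natAbs_natCast]; gcongr; compute_degree
    _ = n := mul_one n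

theorem abs_coeff_wavePoly_le (n j : ℕ) : |(wavePoly n).coeff j| ≤ 4 ^ n := by
  induction n using Nat.twoStepInduction generalizing j with
  | zero => rw [Nat.cast_zero, wavePoly_zero, coeff_one]; split_ifs <;> norm_num
  | one =>
    simp only [wavePoly, Nat.cast_one, Chebyshev.T_one, X_comp, coeff_add, coeff_one, coeff_C_mul,
      coeff_X]
    split_ifs <;> norm_num
  | more n ih₀ ih₁ =>
    have hrec : wavePoly (n + 2 : ℕ) = X * wavePoly (n + 1 : ℕ) + 2 * wavePoly (n + 1 : ℕ)
        - wavePoly n := by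
      rw [X_mul_wavePoly]; push_cast; ring_nf
    rw [hrec, coeff_sub, coeff_add, coeff_ofNat_mul]
    calc _ ≤ |(X * wavePoly (n + 1 : ℕ)).coeff j| + 2 * |(wavePoly (n + 1 : ℕ)).coeff j|
          + |(wavePoly n).coeff j| := by
          rw [sub_eq_add_neg]
          refine (abs_add_three _ _ _).trans ?_
          rw [abs_mul, abs_two, abs_neg]
      _ ≤ 4 ^ (n + 1) + 2 * 4 ^ (n + 1) + 4 ^ n := by
          gcongr
          exacts [abs_coeff_X_mul_le (by positivity) ih₁ j, ih₁ j, ih₀ j]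
      _ ≤ 4 ^ (n + 2) := by ring_nf; linarith [pow_pos (show (0:ℝ) < 4 by norm_num) n]

theorem iteratedDeriv_two_evalSqDeriv_wavePoly (hg : ContDiff ℝ ∞ g) (x : ℤ) (t : ℝ) :
    iteratedDeriv 2 (evalSqDeriv g (wavePoly x)) t = evalSqDeriv g (wavePoly (x + 1)) t
      + evalSqDeriv g (wavePoly (x - 1)) t - 2 * evalSqDeriv g (wavePoly x) t := by
  rw [iteratedDeriv_two_evalSqDeriv hg, X_mul_wavePoly, map_sub, map_add, two_mul, map_add]
  simp only [Pi.add_apply, Pi.sub_apply]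
  ring

theorem exists_abs_evalSqDeriv_wavePoly_le {t : ℝ} (hg : AnalyticAt ℝ g t) :
    ∃ A C : ℝ, 0 ≤ A ∧ 0 ≤ C ∧
      ∀ n : ℕ, |evalSqDeriv g (wavePoly n) t| ≤ A * C ^ n * (2 * n)! := by
  obtain ⟨A, B, hA, hB, hAB⟩ := hg.exists_norm_iteratedDeriv_le
  refine ⟨A, 8 * B ^ 2, hA, by positivity, fun n => ?_⟩
  have hderiv : ∀ j ≤ n, |iteratedDeriv (2 * j) g t| ≤ A * B ^ (2 * n) * (2 * n)! := fun j hj =>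
    calc |iteratedDeriv (2 * j) g t| ≤ A * B ^ (2 * j) * (2 * j)! := hAB (2 * j)
      _ ≤ A * B ^ (2 * n) * (2 * n)! := by gcongr
  calc |evalSqDeriv g (wavePoly n) t|
      ≤ (n + 1) * (4 ^ n * (A * B ^ (2 * n) * (2 * n)!)) :=
        abs_evalSqDeriv_le (natDegree_wavePoly_le n) (abs_coeff_wavePoly_le n) hderiv
    _ ≤ 2 ^ n * (4 ^ n * (A * B ^ (2 * n) * (2 * n)!)) := by
        gcongr; exact_mod_cast Nat.lt_two_pow_self
    _ = A * (8 * B ^ 2) ^ n * (2 * n)! := by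
        rw [pow_mul, mul_pow, show (8 : ℝ) = 2 * 4 by norm_num, mul_pow]; ring

theorem tendsto_abs_evalSqDeriv_wavePoly_mul_exp {ε t : ℝ} (hε : 0 < ε) (hg : AnalyticAt ℝ g t) :
    Tendsto (fun x : ℤ =>
      |evalSqDeriv g (wavePoly x) t| * exp (-(2 + ε) * |(x : ℝ)| * log |(x : ℝ)|)) cofinite (𝓝 0) := by
  obtain ⟨A, C, hA, hC, hAC⟩ := exists_abs_evalSqDeriv_wavePoly_le hg
  have hnat : Tendsto (fun n : ℕ => |evalSqDeriv g (wavePoly n) t| * exp (-(2 + ε) * n * log n))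
      atTop (𝓝 0) := by
    have hbound := (tendsto_pow_mul_factorial_mul_exp hε hC).const_mul A
    rw [mul_zero] at hbound
    refine squeeze_zero (fun n => by positivity) (fun n => ?_) hbound
    rw [← mul_assoc, ← mul_assoc]
    exact mul_le_mul_of_nonneg_right (hAC n) (exp_nonneg _)
  convert hnat.comp Int.tendsto_natAbs_cofinite_atTop using 2 with x
  rw [Function.comp_apply, wavePoly_natAbs, Nat.cast_natAbs, Int.cast_abs]

end WaveLineGraph

open WaveLineGraph in
/-- for every `ε > 0` there is a nontrivial solution of the wave equation on
the integer line graph with zero initial data, which satisfies the spatial decay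
`|u(t,x)|·e^{−(2+ε)|x| ln|x|} → 0` as `|x| → ∞` for every fixed `t`, and whose restriction
`u(·,0)` is not real-analytic at `t = 0`. -/
theorem wave_nonuniqueness_line_graph_sharp (ε : ℝ) (hε : 0 < ε) :
    ∃ u : ℝ → ℤ → ℝ,
      (∀ x : ℤ, ContDiff ℝ 2 (fun t => u t x)) ∧
      (∀ (t : ℝ) (x : ℤ),
        iteratedDeriv 2 (fun s => u s x) t
          = u t (x + 1) + u t (x - 1) - 2 * u t x) ∧
      (∀ x : ℤ, u 0 x = 0) ∧
      (∀ x : ℤ, deriv (fun s => u s x) 0 = 0) ∧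
      (∃ (t : ℝ) (x : ℤ), u t x ≠ 0) ∧
      (∀ t : ℝ, Filter.Tendsto
        (fun x : ℤ => |u t x| * Real.exp (-(2 + ε) * |(x : ℝ)| * Real.log |(x : ℝ)|))
        Filter.cofinite (nhds 0)) ∧
      ¬ AnalyticAt ℝ (fun t => u t 0) 0 := by
  have hsmooth : ContDiff ℝ ∞ expNegInvGlue := expNegInvGlue.contDiff
  have hflat : Set.EqOn expNegInvGlue 0 (Set.Iic 0) := fun t ht => expNegInvGlue.zero_of_nonpos ht
  have hvanish (x : ℤ) := evalSqDeriv_eqOn_zero hsmooth hflat (wavePoly x)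
  have hu₀ : evalSqDeriv expNegInvGlue (wavePoly 0) = expNegInvGlue := by
    rw [wavePoly_zero, evalSqDeriv_one]
  refine ⟨fun t x => evalSqDeriv expNegInvGlue (wavePoly x) t,
    fun x => (contDiff_evalSqDeriv hsmooth _).of_le ENat.LEInfty.out,
    fun t x => iteratedDeriv_two_evalSqDeriv_wavePoly hsmooth x t,
    fun x => hvanish x Set.self_mem_Iic, fun x => ?_, ⟨1, 0, ?_⟩, fun t => ?_, ?_⟩
  · rw [← iteratedDeriv_one]
    exact iteratedDeriv_eq_zero_of_eqOn_Iic
      ((contDiff_evalSqDeriv hsmooth _).of_le ENat.LEInfty.out) (hvanish x)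
      le_rfl
  · simp [hu₀]
  · rcases le_or_gt t 0 with ht | ht
    · simp [hvanish _ ht]
    · exact tendsto_abs_evalSqDeriv_wavePoly_mul_exp hε (expNegInvGlue.analyticAt_of_pos ht)
  · simpa [hu₀] using expNegInvGlue.not_analyticAt_zero
end

section
/- Let g(t) = exp(−t^{−β}) for t > 0 and g(t) = 0 for t ≤ 0. Define u : ℝ × ℤ → ℝ by u(t,0) = g(t); for x ≥ 1, u(t,x) = g(t) + Σ_{k=1}^∞ [g^{(2k)}(t)/(2k)!] · (x+k)(x+k−1)···(x+1)·x·(x−1)···(x−k+1); and u(t,x) = u(t,−x−1) for x ≤ −1. Then for each fixed x the sum is finite (terms with k > x vanish), u solves ∂_t² u(t,x) = u(t,x+1) + u(t,x−1) − 2u(t,x) on ℝ × ℤ, and ∂_t^k u(0,x) = 0 for all k ∈ ℕ₀ and x ∈ ℤ. -/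
/-- The product `(x+k)(x+k−1)···(x−k+1)` of the `2k` consecutive integers from
`x−k+1` up to `x+k`. -/
noncomputable def consecProd (x : ℤ) (k : ℕ) : ℝ :=
  ∏ j ∈ Finset.range (2 * k), ((x + k - j : ℤ) : ℝ)

/-- The Tychonoff-type function: `u(t,0) = g(t)`,
`u(t,x) = g(t) + Σ_{k≥1} g^{(2k)}(t)/(2k)! · (x+k)···(x−k+1)` for `x ≥ 1`,
and `u(t,x) = u(t,−x−1)` for `x ≤ −1` (note the product vanishes for `x = 0`, `k ≥ 1`,
so the formula below covers all three cases). -/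
noncomputable def uline (β : ℝ) (t : ℝ) (x : ℤ) : ℝ :=
  gfun β t + ∑' k : ℕ,
    iteratedDeriv (2 * (k + 1)) (gfun β) t / (Nat.factorial (2 * (k + 1))) *
      consecProd (if 0 ≤ x then x else -x - 1) (k + 1)


/-!
Every derivative of `g` is a linear combination of the functions `t ↦ t^{-a} e^{-t^{-β}}`
(extended by `0` to `t ≤ 0`), and these are differentiable, with derivatives again of this form,
and vanish at `0`. Hence `g` is smooth and flat at `0`.

Write `P_k(x)` for the product `(x+k)⋯(x−k+1)`. It is invariant under `x ↦ −x−1`, so for every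
`x ∈ ℤ` we have `u(t,x) = Σ_k P_k(x) g^{(2k)}(t)/(2k)!`. This sum is finite because `P_k(x) = 0`
for `k > |x|`. The second difference identity
`P_{k+1}(x+1) + P_{k+1}(x−1) − 2 P_{k+1}(x) = (2k+2)(2k+1) P_k(x)`
says that the discrete Laplacian of the `(k+1)`-st term equals the second time derivative
of the `k`-th term.
-/

open Real Filter Topology Finset
open scoped ContDiff

section Flatness

variable {𝕜 F : Type*} [NontriviallyNormedField 𝕜] [NormedAddCommGroup F] [NormedSpace 𝕜 F]

theorem contDiff_infty_of_mem_of_deriv_mem {S : Set (𝕜 → F)}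
    (hdiff : ∀ f ∈ S, Differentiable 𝕜 f) (hderiv : ∀ f ∈ S, deriv f ∈ S) {f : 𝕜 → F}
    (hf : f ∈ S) : ContDiff 𝕜 ∞ f := by
  rw [contDiff_infty]
  intro n
  induction n generalizing f with
  | zero => exact contDiff_zero.mpr (hdiff f hf).continuous
  | succ n ih =>
    push_cast
    exact contDiff_succ_iff_deriv.mpr ⟨hdiff f hf, by simp, ih (hderiv f hf)⟩

end Flatness

section FlatFunction

variable {β : ℝ}

noncomputable def flatTerm (β a : ℝ) (t : ℝ) : ℝ :=
  if 0 < t then t ^ (-a) * Real.exp (-(t ^ (-β))) else 0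

lemma flatTerm_of_nonpos (a : ℝ) {t : ℝ} (ht : t ≤ 0) : flatTerm β a t = 0 := by
  simp [flatTerm, not_lt.mpr ht]

lemma flatTerm_of_pos (a : ℝ) {t : ℝ} (ht : 0 < t) :
    flatTerm β a t = t ^ (-a) * Real.exp (-(t ^ (-β))) :=
  if_pos ht

lemma gfun_eq_flatTerm_zero (β : ℝ) : gfun β = flatTerm β 0 := by
  funext t
  simp only [gfun, flatTerm, neg_zero, Real.rpow_zero, one_mul]

lemma tendsto_rpow_neg_mul_exp_neg_rpow_neg (hβ : 0 < β) (a : ℝ) :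
    Tendsto (fun t : ℝ => t ^ (-a) * Real.exp (-(t ^ (-β)))) (𝓝[>] 0) (𝓝 0) := by
  have h_inv_pow : Tendsto (fun t : ℝ => t ^ (-β)) (𝓝[>] 0) atTop := by
    refine ((tendsto_rpow_atTop hβ).comp tendsto_inv_nhdsGT_zero).congr' ?_
    filter_upwards [self_mem_nhdsWithin] with t (ht : 0 < t)
    rw [Function.comp_apply, Real.inv_rpow ht.le, ← Real.rpow_neg ht.le]
  -- substitute `s = t^{-β}`, so that `t^{-a} = s^{a/β}`
  refine ((tendsto_rpow_mul_exp_neg_mul_atTop_nhds_zero (a / β) 1 one_pos).comp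
    h_inv_pow).congr' ?_
  filter_upwards [self_mem_nhdsWithin] with t (ht : 0 < t)
  rw [Function.comp_apply, ← Real.rpow_mul ht.le, neg_one_mul]
  field_simp

lemma hasDerivAt_flatTerm (hβ : 0 < β) (a t : ℝ) :
    HasDerivAt (flatTerm β a) (-a * flatTerm β (a + 1) t + β * flatTerm β (a + β + 1) t) t := by
  rcases lt_trichotomy t 0 with ht | rfl | ht
  · rw [flatTerm_of_nonpos _ ht.le, flatTerm_of_nonpos _ ht.le, mul_zero, mul_zero, add_zero]
    refine (hasDerivAt_const t 0).congr_of_eventuallyEq ?_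
    filter_upwards [Iio_mem_nhds ht] with s hs
    exact flatTerm_of_nonpos a (le_of_lt hs)
  · rw [flatTerm_of_nonpos _ le_rfl, flatTerm_of_nonpos _ le_rfl, mul_zero, mul_zero, add_zero,
      hasDerivAt_iff_tendsto_slope, ← nhdsLT_sup_nhdsGT, tendsto_sup]
    constructor
    · refine tendsto_const_nhds.congr' ?_
      filter_upwards [self_mem_nhdsWithin] with s (hs : s < 0)
      simp [slope, flatTerm_of_nonpos a hs.le, flatTerm_of_nonpos a le_rfl]
    · refine (tendsto_rpow_neg_mul_exp_neg_rpow_neg hβ (a + 1)).congr' ?_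
      filter_upwards [self_mem_nhdsWithin] with s (hs : 0 < s)
      rw [slope_def_field, flatTerm_of_nonpos a le_rfl, flatTerm_of_pos a hs, sub_zero, sub_zero,
        neg_add, Real.rpow_add hs, Real.rpow_neg_one]
      field_simp
  · have h_pow : HasDerivAt (fun s : ℝ => s ^ (-a)) (-a * t ^ (-a - 1)) t :=
      Real.hasDerivAt_rpow_const (Or.inl ht.ne')
    have h_exp : HasDerivAt (fun s : ℝ => Real.exp (-(s ^ (-β))))
        (Real.exp (-(t ^ (-β))) * -(-β * t ^ (-β - 1))) t :=
      (Real.hasDerivAt_exp _).comp t (Real.hasDerivAt_rpow_const (Or.inl ht.ne')).neg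
    refine (h_pow.mul h_exp).congr_of_eventuallyEq ?_ |>.congr_deriv ?_
    · filter_upwards [Ioi_mem_nhds ht] with s hs
      exact flatTerm_of_pos a hs
    · rw [flatTerm_of_pos _ ht, flatTerm_of_pos _ ht, show -(a + 1) = -a - 1 by ring,
        show -(a + β + 1) = -a + (-β - 1) by ring, Real.rpow_add ht]
      ring

noncomputable def flatSpan (β : ℝ) : Submodule ℝ (ℝ → ℝ) :=
  Submodule.span ℝ (Set.range (flatTerm β))

lemma apply_zero_of_mem_flatSpan {f : ℝ → ℝ} (hf : f ∈ flatSpan β) : f 0 = 0 := by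
  have h_le : flatSpan β ≤ LinearMap.ker (LinearMap.proj 0) :=
    Submodule.span_le.mpr <| Set.range_subset_iff.mpr fun a => flatTerm_of_nonpos a le_rfl
  exact h_le hf

lemma differentiable_of_mem_flatSpan (hβ : 0 < β) {f : ℝ → ℝ} (hf : f ∈ flatSpan β) :
    Differentiable ℝ f := by
  induction hf using Submodule.span_induction with
  | mem f hf =>
    obtain ⟨a, rfl⟩ := hf
    exact fun t => (hasDerivAt_flatTerm hβ a t).differentiableAt
  | zero => exact differentiable_const 0
  | add f g _ _ hf hg => exact hf.add hg
  | smul c f _ hf => exact hf.const_smul c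

lemma deriv_mem_flatSpan (hβ : 0 < β) {f : ℝ → ℝ} (hf : f ∈ flatSpan β) :
    deriv f ∈ flatSpan β := by
  induction hf using Submodule.span_induction with
  | mem f hf =>
    obtain ⟨a, rfl⟩ := hf
    have h_deriv : deriv (flatTerm β a) = (-a) • flatTerm β (a + 1) + β • flatTerm β (a + β + 1) :=
      funext fun t => (hasDerivAt_flatTerm hβ a t).deriv
    rw [h_deriv]
    exact add_mem (Submodule.smul_mem _ _ (Submodule.subset_span ⟨a + 1, rfl⟩))
      (Submodule.smul_mem _ _ (Submodule.subset_span ⟨a + β + 1, rfl⟩))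
  | zero => rw [deriv_zero]; exact zero_mem _
  | add f g hf hg hf' hg' =>
    have h_deriv : deriv (f + g) = deriv f + deriv g := funext fun t =>
      deriv_add (differentiable_of_mem_flatSpan hβ hf t) (differentiable_of_mem_flatSpan hβ hg t)
    exact h_deriv ▸ add_mem hf' hg'
  | smul c f hf hf' =>
    have h_deriv : deriv (c • f) = c • deriv f := funext fun t =>
      deriv_const_smul c (differentiable_of_mem_flatSpan hβ hf t)
    exact h_deriv ▸ Submodule.smul_mem _ c hf'

lemma iteratedDeriv_gfun_mem_flatSpan (hβ : 0 < β) (n : ℕ) :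
    iteratedDeriv n (gfun β) ∈ flatSpan β := by
  induction n with
  | zero => exact iteratedDeriv_zero (f := gfun β) ▸ gfun_eq_flatTerm_zero β ▸
      Submodule.subset_span ⟨0, rfl⟩
  | succ n ih => exact iteratedDeriv_succ (f := gfun β) ▸ deriv_mem_flatSpan hβ ih

theorem contDiff_gfun (hβ : 0 < β) : ContDiff ℝ ∞ (gfun β) :=
  contDiff_infty_of_mem_of_deriv_mem (fun _ => differentiable_of_mem_flatSpan hβ)
    (fun _ => deriv_mem_flatSpan hβ) (iteratedDeriv_gfun_mem_flatSpan hβ 0)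

theorem iteratedDeriv_gfun_zero (hβ : 0 < β) (n : ℕ) : iteratedDeriv n (gfun β) 0 = 0 :=
  apply_zero_of_mem_flatSpan (iteratedDeriv_gfun_mem_flatSpan hβ n)

end FlatFunction

section ConsecProd

@[simp]
lemma consecProd_zero_right (x : ℤ) : consecProd x 0 = 1 := by
  simp [consecProd]

lemma consecProd_eq_zero {x : ℤ} {k : ℕ} (hk : x.natAbs < k) : consecProd x k = 0 :=
  prod_eq_zero (i := (x + k).toNat) (by rw [mem_range]; omega) (by rw [Int.cast_eq_zero]; omega)

lemma consecProd_neg_sub_one (x : ℤ) (k : ℕ) : consecProd (-x - 1) k = consecProd x k := by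
  unfold consecProd
  rw [← prod_range_reflect]
  have h_reflect : ∀ j ∈ range (2 * k),
      (((-x - 1 + k - (2 * k - 1 - j : ℕ) : ℤ) : ℝ)) = -((x + k - j : ℤ) : ℝ) := by
    intro j hj
    rw [mem_range] at hj
    push_cast [Nat.sub_sub, Nat.cast_sub (show 1 + j ≤ 2 * k by omega)]
    ring
  rw [prod_congr rfl h_reflect, prod_neg, card_range, (even_two_mul k).neg_one_pow, one_mul]

lemma consecProd_succ (x : ℤ) (k : ℕ) :
    consecProd x (k + 1) = ((x : ℝ) + k + 1) * ((x : ℝ) - k) * consecProd x k := by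
  unfold consecProd
  rw [show 2 * (k + 1) = 2 * k + 1 + 1 by ring, prod_range_succ, prod_range_succ']
  push_cast
  ring_nf

lemma consecProd_add_one_succ (x : ℤ) (k : ℕ) :
    consecProd (x + 1) (k + 1) = ((x : ℝ) + k + 2) * ((x : ℝ) + k + 1) * consecProd x k := by
  unfold consecProd
  rw [show 2 * (k + 1) = 2 * k + 1 + 1 by ring, prod_range_succ', prod_range_succ']
  push_cast
  ring_nf

lemma consecProd_sub_one_succ (x : ℤ) (k : ℕ) :
    consecProd (x - 1) (k + 1) = ((x : ℝ) - k - 1) * ((x : ℝ) - k) * consecProd x k := by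
  unfold consecProd
  rw [show 2 * (k + 1) = 2 * k + 1 + 1 by ring, prod_range_succ, prod_range_succ]
  push_cast
  ring_nf

lemma consecProd_second_difference_div_factorial (x : ℤ) (k : ℕ) :
    (consecProd (x + 1) (k + 1) + consecProd (x - 1) (k + 1) - 2 * consecProd x (k + 1))
        / (2 * (k + 1)).factorial = consecProd x k / (2 * k).factorial := by
  have h_factorial :
      ((2 * (k + 1)).factorial : ℝ) = (2 * k + 2) * (2 * k + 1) * (2 * k).factorial := by
    rw [show 2 * (k + 1) = 2 * k + 1 + 1 by ring, Nat.factorial_succ, Nat.factorial_succ]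
    push_cast
    ring
  rw [consecProd_add_one_succ, consecProd_sub_one_succ, consecProd_succ, h_factorial]
  field_simp
  ring

end ConsecProd

section TychonoffSum

variable {h : ℝ → ℝ}

noncomputable def tychonoffSum (h : ℝ → ℝ) (x : ℤ) (N : ℕ) (t : ℝ) : ℝ :=
  ∑ k ∈ range N, consecProd x k / (2 * k).factorial * iteratedDeriv (2 * k) h t

lemma iteratedDeriv_tychonoffSum (hh : ContDiff ℝ ∞ h) (x : ℤ) (N j : ℕ) (t : ℝ) :
    iteratedDeriv j (tychonoffSum h x N) t
      = ∑ k ∈ range N, consecProd x k / (2 * k).factorial * iteratedDeriv (2 * k + j) h t := by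
  have h_smooth : ∀ n, ContDiff ℝ ∞ (iteratedDeriv n h) := fun n =>
    iteratedDeriv_eq_iterate (f := h) ▸ hh.iterate_deriv n
  unfold tychonoffSum
  rw [iteratedDeriv_fun_sum fun k _ =>
    (contDiff_const.mul (h_smooth (2 * k))).contDiffAt.of_le (by exact_mod_cast le_top)]
  refine sum_congr rfl fun k _ => ?_
  rw [iteratedDeriv_const_mul_field, iteratedDeriv_eq_iterate, iteratedDeriv_eq_iterate,
    iteratedDeriv_eq_iterate, add_comm, Function.iterate_add_apply]

lemma iteratedDeriv_two_tychonoffSum (hh : ContDiff ℝ ∞ h) (x : ℤ) (N : ℕ) (t : ℝ) :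
    iteratedDeriv 2 (tychonoffSum h x N) t
      = tychonoffSum h (x + 1) (N + 1) t + tychonoffSum h (x - 1) (N + 1) t
        - 2 * tychonoffSum h x (N + 1) t := by
  rw [iteratedDeriv_tychonoffSum hh]
  simp only [tychonoffSum]
  rw [mul_sum, ← sum_add_distrib, ← sum_sub_distrib, sum_range_succ', consecProd_zero_right,
    consecProd_zero_right, consecProd_zero_right, show ∀ a : ℝ, a + a - 2 * a = 0 by intro; ring,
    add_zero]
  refine sum_congr rfl fun k _ => ?_
  rw [← consecProd_second_difference_div_factorial, Nat.mul_succ]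
  ring

end TychonoffSum

lemma uline_eq_tychonoffSum {β t : ℝ} {x : ℤ} {n : ℕ} (hn : x.natAbs ≤ n) :
    uline β t x = tychonoffSum (gfun β) x (n + 1) t := by
  have h_fold : consecProd (if 0 ≤ x then x else -x - 1) = consecProd x := by
    split_ifs
    · rfl
    · exact funext (consecProd_neg_sub_one x)
  rw [uline, h_fold, tsum_eq_sum (s := range n) fun k hk => ?_, tychonoffSum, sum_range_succ',
    add_comm]
  · simp only [consecProd_zero_right, mul_zero, Nat.factorial_zero, Nat.cast_one, div_one,
      one_mul, iteratedDeriv_zero]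
    exact congrArg (· + gfun β t) (sum_congr rfl fun k _ => by ring)
  · rw [consecProd_eq_zero (by rw [mem_range] at hk; omega), mul_zero]

/-- the series defining `u` is a finite sum for each fixed `x` (terms with
`k > x` vanish), `u` solves the wave equation `∂_t² u(t,x) = u(t,x+1) + u(t,x−1) − 2u(t,x)`
on `ℝ × ℤ`, and all time derivatives of `u` vanish at `t = 0`. -/
theorem uline_solves_wave (β : ℝ) (hβ : 0 < β) :
    (∀ x : ℤ, 1 ≤ x → ∀ k : ℕ, (x : ℤ) < (k : ℤ) → consecProd x k = 0) ∧
    (∀ t : ℝ, uline β t 0 = gfun β t) ∧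
    (∀ (t : ℝ) (x : ℤ), x ≤ -1 → uline β t x = uline β t (-x - 1)) ∧
    (∀ (t : ℝ) (x : ℤ),
      iteratedDeriv 2 (fun s => uline β s x) t
        = uline β t (x + 1) + uline β t (x - 1) - 2 * uline β t x) ∧
    (∀ (k : ℕ) (x : ℤ), iteratedDeriv k (fun s => uline β s x) 0 = 0) := by
  have h_uline (x : ℤ) : (fun s => uline β s x) = tychonoffSum (gfun β) x (x.natAbs + 1) :=
    funext fun _ => uline_eq_tychonoffSum le_rfl
  refine ⟨fun x _ k hk => consecProd_eq_zero (by omega), fun t => ?_, fun t x hx => ?_,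
    fun t x => ?_, fun k x => ?_⟩
  · rw [uline_eq_tychonoffSum (n := 0) le_rfl]
    simp [tychonoffSum]
  · rw [uline, uline, if_neg (by omega), if_pos (by omega)]
  · rw [h_uline, iteratedDeriv_two_tychonoffSum (contDiff_gfun hβ),
      ← uline_eq_tychonoffSum (x := x + 1) (by omega),
      ← uline_eq_tychonoffSum (x := x - 1) (by omega), ← uline_eq_tychonoffSum (x := x) (by omega)]
  · rw [h_uline, iteratedDeriv_tychonoffSum (contDiff_gfun hβ)]
    simp [iteratedDeriv_gfun_zero hβ]
end

section
/- Let G = (V,E,μ,ω) be a weighted graph with p ∈ V and Deg(x) ≤ D·d(x,p)^α for all x ≠ p, with D > 0 and 0 ≤ α ≤ 2. Let T ∈ (0,∞] and suppose u, v : (−T,T) × V → ℝ are solutions of the wave equation ∂_t² w = Δw + f with the same inhomogeneity f, same initial values u(0,·) = v(0,·) = g and ∂_t u(0,·) = ∂_t v(0,·) = h, and both satisfy the growth bound |w(t,x)| ≤ C·d(x,p)^{(2−α)·d(x,p)} for all t ∈ (−T,T), x ≠ p (with possibly different constants C). Then u ≡ v on (−T,T) × V. -/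
/-!
The difference `w = u - v` solves the homogeneous equation with zero Cauchy data. At each vertex
`x`, the functions `Δⁿw(·,x)` and `Δⁿ∂ₜw(·,x)` form a chain in which each is the time derivative
of the previous one, all vanishing at the initial time, so `|w(t,x)| ≤ sup |Δⁿw(·,x)| · t²ⁿ/(2n)!`.
Each Laplacian costs a factor `2 Deg ≲ d^α` and reaches one step further from `p`, so in the
growth class `|Δⁿw(x)| ≲ (2K)ⁿ m^{αn + (2-α)m}` with `m = n + d(x,p) + 1`. The exponent is
`2n + O(d)`: the loss `α` per step is compensated exactly by the growth exponent `2 - α`, and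
`(2n)! ≥ (2n)^{2n} e^{-2n}` absorbs `m^{2n}`. Hence the bound tends to `0` as `n → ∞` whenever `|t|`
is below a fixed step length, and stepping along `(-T, T)` (reflecting time for `t < 0`) gives
`w = 0`.
-/

noncomputable def graphLap {V : Type*} (G : SimpleGraph V) [∀ v, Fintype (G.neighborSet v)]
    (ω : V → V → ℝ) (μ : V → ℝ) (f : V → ℝ) (x : V) : ℝ :=
  ∑ y ∈ G.neighborFinset x, ω x y / μ x * (f y - f x)

noncomputable def wDeg {V : Type*} (G : SimpleGraph V) [∀ v, Fintype (G.neighborSet v)]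
    (ω : V → V → ℝ) (μ : V → ℝ) (x : V) : ℝ :=
  ∑ y ∈ G.neighborFinset x, ω x y / μ x

open Real Set Filter Topology
open scoped Nat

theorem abs_le_pow_succ_div_factorial_of_hasDerivAt {f f' : ℝ → ℝ} {a b B : ℝ} {n : ℕ}
    (hf : ∀ s ∈ Icc a b, HasDerivAt f (f' s) s) (ha : f a = 0)
    (hf' : ∀ s ∈ Icc a b, |f' s| ≤ B * (s - a) ^ n / n !) :
    ∀ s ∈ Icc a b, |f s| ≤ B * (s - a) ^ (n + 1) / (n + 1)! := by
  have hbound (s : ℝ) : HasDerivAt (fun s => B * (s - a) ^ (n + 1) / (n + 1)!)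
      (B * (s - a) ^ n / n !) s := by
    have h := ((((hasDerivAt_id' s).sub_const a).pow (n + 1)).const_mul B).div_const
      ((n + 1)! : ℝ)
    refine h.congr_deriv ?_
    rw [Nat.factorial_succ]
    push_cast
    field_simp
  exact image_norm_le_of_norm_deriv_right_le_deriv_boundary
    (fun s hs => (hf s hs).continuousAt.continuousWithinAt)
    (fun s hs => (hf s (Ico_subset_Icc_self hs)).hasDerivWithinAt) (by simp [ha]) hbound
    (fun s hs => hf' s (Ico_subset_Icc_self hs))

theorem abs_le_pow_two_mul_div_factorial_of_hasDerivAt {f g : ℕ → ℝ → ℝ} {a b B : ℝ}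
    (hf : ∀ k, ∀ s ∈ Icc a b, HasDerivAt (f k) (g k s) s)
    (hg : ∀ k, ∀ s ∈ Icc a b, HasDerivAt (g k) (f (k + 1) s) s)
    (hfa : ∀ k, f k a = 0) (hga : ∀ k, g k a = 0) (n : ℕ)
    (hB : ∀ s ∈ Icc a b, |f n s| ≤ B) :
    ∀ s ∈ Icc a b, |f 0 s| ≤ B * (s - a) ^ (2 * n) / (2 * n)! := by
  induction n generalizing f g with
  | zero => simpa using hB
  | succ n ih =>
    have hf1 := ih (fun k => hf (k + 1)) (fun k => hg (k + 1)) (fun k => hfa (k + 1))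
      (fun k => hga (k + 1)) hB
    have hg0 := abs_le_pow_succ_div_factorial_of_hasDerivAt (hg 0) (hga 0) hf1
    exact abs_le_pow_succ_div_factorial_of_hasDerivAt (hf 0) (hfa 0) hg0

theorem pow_two_mul_div_factorial_le_exp {x : ℝ} (hx : 0 ≤ x) (n : ℕ) :
    x ^ (2 * n) / (2 * n)! ≤ exp (2 * x) / 4 ^ n := by
  have h := pow_div_factorial_le_exp (2 * x) (by positivity) (2 * n)
  rw [mul_pow, pow_mul, show (2 : ℝ) ^ 2 = 4 by norm_num] at h
  rw [le_div_iff₀ (by positivity)]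
  calc x ^ (2 * n) / (2 * n)! * 4 ^ n = 4 ^ n * x ^ (2 * n) / (2 * n)! := by ring
    _ ≤ exp (2 * x) := h

theorem tendsto_natCast_add_pow_mul_pow (c k : ℕ) {r : ℝ} (hr0 : 0 < r) (hr : r < 1) :
    Tendsto (fun n : ℕ => ((n + c : ℕ) : ℝ) ^ k * r ^ n) atTop (𝓝 0) := by
  have h := ((tendsto_pow_const_mul_const_pow_of_abs_lt_one k (abs_lt.2 ⟨by linarith, hr⟩)).comp
    (tendsto_add_atTop_nat c)).const_mul (r ^ c)⁻¹
  rw [mul_zero] at h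
  refine h.congr fun n => ?_
  simp only [Function.comp_apply, pow_add]
  field_simp

theorem eq_zero_of_hasDerivAt_of_growth {f g : ℕ → ℝ → ℝ} {a b A R : ℝ} {c : ℕ}
    (hf : ∀ k, ∀ s ∈ Icc a b, HasDerivAt (f k) (g k s) s)
    (hg : ∀ k, ∀ s ∈ Icc a b, HasDerivAt (g k) (f (k + 1) s) s)
    (hfa : ∀ k, f k a = 0) (hga : ∀ k, g k a = 0)
    (hR : 0 ≤ R) (hab : R * (exp 1 * (b - a)) ^ 2 ≤ 1)
    (hgrowth : ∀ n, ∀ s ∈ Icc a b, |f n s| ≤ A * R ^ n * ((n + c : ℕ) : ℝ) ^ (2 * (n + c))) :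
    ∀ s ∈ Icc a b, f 0 s = 0 := by
  intro s hs
  have hsa : 0 ≤ s - a := sub_nonneg.2 hs.1
  have hbound (n : ℕ) :
      |f 0 s| ≤ |A| * exp (2 * c) * ((n + c : ℕ) : ℝ) ^ (2 * c) * (1 / 4) ^ n := by
    set m : ℝ := ((n + c : ℕ) : ℝ) with hm
    have hm0 : 0 ≤ m := by positivity
    have hq : R * (exp 1 * (s - a)) ^ 2 ≤ 1 := by
      refine le_trans ?_ hab
      gcongr
      exact hs.2
    have htaylor := abs_le_pow_two_mul_div_factorial_of_hasDerivAt hf hg hfa hga n (hgrowth n) s hs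
    generalize s - a = e at hsa hq htaylor
    calc |f 0 s|
        ≤ A * R ^ n * m ^ (2 * (n + c)) * e ^ (2 * n) / (2 * n)! := htaylor
      _ ≤ |A| * m ^ (2 * c) * (R * e ^ 2) ^ n * (m ^ (2 * n) / (2 * n)!) := by
          rw [show A * R ^ n * m ^ (2 * (n + c)) * e ^ (2 * n) / (2 * n)! =
            A * (m ^ (2 * c) * (R * e ^ 2) ^ n * (m ^ (2 * n) / (2 * n)!)) by ring]
          rw [mul_assoc |A|, mul_assoc |A|]
          gcongr
          exact le_abs_self A
      _ ≤ |A| * m ^ (2 * c) * (R * e ^ 2) ^ n * (exp (2 * m) / 4 ^ n) :=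
          mul_le_mul_of_nonneg_left (pow_two_mul_div_factorial_le_exp hm0 n) (by positivity)
      _ = |A| * exp (2 * c) * m ^ (2 * c) * (R * (exp 1 * e) ^ 2 / 4) ^ n := by
          rw [hm]
          push_cast
          rw [show 2 * ((n : ℝ) + c) = ((2 * n : ℕ) : ℝ) + 2 * c by push_cast; ring, exp_add,
            ← exp_one_pow, div_pow]
          ring
      _ ≤ |A| * exp (2 * c) * m ^ (2 * c) * (1 / 4) ^ n := by
          gcongr
  have hlim := (tendsto_natCast_add_pow_mul_pow c (2 * c) (r := 1 / 4) (by norm_num)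
    (by norm_num)).const_mul (|A| * exp (2 * c))
  rw [mul_zero] at hlim
  exact abs_nonpos_iff.1 <| ge_of_tendsto' hlim fun n => by rw [← mul_assoc]; exact hbound n

theorem HasDerivAt.eq_zero_of_eqOn_Icc {f : ℝ → ℝ} {f' a b : ℝ} (hab : a < b)
    (hf : HasDerivAt f f' b) (h0 : EqOn f 0 (Icc a b)) : f' = 0 :=
  (uniqueDiffOn_Icc hab b (right_mem_Icc.2 hab.le)).eq_deriv _ hf.hasDerivWithinAt
    ((hasDerivWithinAt_const b _ 0).congr (fun _ hy => h0 hy) (h0 (right_mem_Icc.2 hab.le)))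

theorem ContDiffOn.hasDerivAt_deriv_of_isOpen {f : ℝ → ℝ} {I : Set ℝ} (hf : ContDiffOn ℝ 2 f I)
    (hI : IsOpen I) {t : ℝ} (ht : t ∈ I) :
    HasDerivAt f (deriv f t) t ∧ HasDerivAt (deriv f) (iteratedDerivWithin 2 f I t) t := by
  refine ⟨((hf.differentiableOn two_ne_zero).differentiableAt (hI.mem_nhds ht)).hasDerivAt, ?_⟩
  rw [iteratedDerivWithin_of_isOpen_eq_iterate hI ht]
  exact (((hf.deriv_of_isOpen hI (by norm_num : (1 : WithTop ℕ∞) + 1 ≤ 2)).differentiableOn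
    one_ne_zero).differentiableAt (hI.mem_nhds ht)).hasDerivAt

theorem SimpleGraph.Connected.dist_le_dist_add_one_of_adj {V : Type*} {G : SimpleGraph V}
    (hconn : G.Connected) {x y : V} (h : G.Adj x y) (p : V) : G.dist y p ≤ G.dist x p + 1 := by
  have := hconn.dist_triangle (u := y) (v := x) (w := p)
  rwa [G.dist_eq_one_iff_adj.2 h.symm, add_comm] at this

section WaveEquation

variable {V : Type*} {G : SimpleGraph V} [∀ v, Fintype (G.neighborSet v)] {ω : V → V → ℝ}
  {μ : V → ℝ} {I : Set ℝ}

theorem graphLap_sub (F H : V → ℝ) (x : V) :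
    graphLap G ω μ (F - H) x = graphLap G ω μ F x - graphLap G ω μ H x := by
  simp only [graphLap, ← Finset.sum_sub_distrib, Pi.sub_apply]
  exact Finset.sum_congr rfl fun _ _ => by ring

theorem iterate_graphLap_zero (n : ℕ) : (graphLap G ω μ)^[n] 0 = 0 :=
  Function.iterate_fixed (funext fun x => by simp [graphLap]) n

theorem hasDerivAt_iterate_graphLap {F : ℝ → V → ℝ} {F' : V → ℝ} {t : ℝ}
    (h : ∀ y, HasDerivAt (fun s => F s y) (F' y) t) (n : ℕ) (x : V) :
    HasDerivAt (fun s => (graphLap G ω μ)^[n] (F s) x) ((graphLap G ω μ)^[n] F' x) t := by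
  induction n generalizing x with
  | zero => exact h x
  | succ n ih =>
    simp only [Function.iterate_succ_apply', graphLap]
    exact HasDerivAt.fun_sum fun y _ => ((ih y).sub (ih x)).const_mul _

theorem wDeg_nonneg {x : V} (hμ : 0 < μ x) (hω : ∀ y, G.Adj x y → 0 < ω x y) :
    0 ≤ wDeg G ω μ x :=
  Finset.sum_nonneg fun y hy => (div_pos (hω y ((G.mem_neighborFinset x y).1 hy)) hμ).le

theorem abs_graphLap_le {x : V} (hμ : 0 < μ x) (hω : ∀ y, G.Adj x y → 0 < ω x y)
    {F : V → ℝ} {M : ℝ} (hx : |F x| ≤ M) (hnbr : ∀ y, G.Adj x y → |F y| ≤ M) :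
    |graphLap G ω μ F x| ≤ 2 * M * wDeg G ω μ x := by
  rw [wDeg, Finset.mul_sum]
  refine (Finset.abs_sum_le_sum_abs _ _).trans (Finset.sum_le_sum fun y hy => ?_)
  have hadj := (G.mem_neighborFinset x y).1 hy
  have hwt : 0 ≤ ω x y / μ x := (div_pos (hω y hadj) hμ).le
  rw [abs_mul, abs_of_nonneg hwt, mul_comm]
  gcongr
  calc |F y - F x| ≤ |F y| + |F x| := abs_sub _ _
    _ ≤ 2 * M := by linarith [hnbr y hadj]

theorem abs_iterate_graphLap_le (hconn : G.Connected) (hμ : ∀ x, 0 < μ x)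
    (hω : ∀ x y, G.Adj x y → 0 < ω x y) {p : V} {δ ρ : ℕ → ℝ} (hδ : Monotone δ)
    (hρ : Monotone ρ) (hdeg : ∀ x, wDeg G ω μ x ≤ δ (G.dist x p)) {F : V → ℝ}
    (hF : ∀ x, |F x| ≤ ρ (G.dist x p)) (n : ℕ) (x : V) :
    |(graphLap G ω μ)^[n] F x| ≤ (2 * δ (G.dist x p + n)) ^ n * ρ (G.dist x p + n) := by
  have hδ0 (r : ℕ) : 0 ≤ δ r :=
    ((wDeg_nonneg (hμ p) (hω p)).trans (by simpa using hdeg p)).trans (hδ (Nat.zero_le r))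
  have hρ0 (r : ℕ) : 0 ≤ ρ r :=
    ((abs_nonneg _).trans (by simpa using hF p)).trans (hρ (Nat.zero_le r))
  induction n generalizing x with
  | zero => simpa using hF x
  | succ n ih =>
    set M := (2 * δ (G.dist x p + (n + 1))) ^ n * ρ (G.dist x p + (n + 1)) with hM
    have hle {y : V} (hy : G.dist y p ≤ G.dist x p + 1) :
        |(graphLap G ω μ)^[n] F y| ≤ M := by
      refine (ih y).trans ?_
      rw [hM]
      have hr : G.dist y p + n ≤ G.dist x p + (n + 1) := by omega
      exact mul_le_mul (pow_le_pow_left₀ (mul_nonneg zero_le_two (hδ0 _)) (by linarith [hδ hr]) n)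
        (hρ hr) (hρ0 _) (pow_nonneg (mul_nonneg zero_le_two (hδ0 _)) n)
    rw [Function.iterate_succ_apply']
    calc |graphLap G ω μ ((graphLap G ω μ)^[n] F) x|
        ≤ 2 * M * wDeg G ω μ x := abs_graphLap_le (hμ x) (hω x) (hle (y := x) (by omega))
            fun y hy => hle (hconn.dist_le_dist_add_one_of_adj hy p)
      _ ≤ 2 * M * δ (G.dist x p + (n + 1)) := by
          gcongr
          · linarith [(abs_nonneg _).trans (hle (y := x) (by omega))]
          · exact (hdeg x).trans (hδ (by omega))
      _ = (2 * δ (G.dist x p + (n + 1))) ^ (n + 1) * ρ (G.dist x p + (n + 1)) := by ring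

theorem abs_iterate_graphLap_le_of_rpow_growth (hconn : G.Connected) (hμ : ∀ x, 0 < μ x)
    (hω : ∀ x y, G.Adj x y → 0 < ω x y) {p : V} {K α C : ℝ} (hα0 : 0 ≤ α) (hα2 : α ≤ 2)
    (hdeg : ∀ x, wDeg G ω μ x ≤ K * ((G.dist x p : ℝ) + 1) ^ α) {F : V → ℝ}
    (hF : ∀ x, |F x| ≤ C * (G.dist x p : ℝ) ^ ((2 - α) * G.dist x p)) (n : ℕ) (x : V) :
    |(graphLap G ω μ)^[n] F x| ≤
      C * (2 * K) ^ n * ((n + (G.dist x p + 1) : ℕ) : ℝ) ^ (2 * (n + (G.dist x p + 1))) := by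
  have hK : 0 ≤ K := by simpa using (wDeg_nonneg (hμ p) (hω p)).trans (hdeg p)
  -- at `x = p` the growth bound reads `|F p| ≤ C`, since `0 ^ 0 = 1`
  have hC : 0 ≤ C := by simpa using (abs_nonneg _).trans (hF p)
  have hδ : Monotone fun r : ℕ => K * ((r : ℝ) + 1) ^ α := fun r s hrs => by
    dsimp only
    gcongr
  have hρ : Monotone fun r : ℕ => C * ((r : ℝ) + 1) ^ ((2 - α) * r) := fun r s hrs => by
    dsimp only
    gcongr
    calc ((r : ℝ) + 1) ^ ((2 - α) * r) ≤ ((r : ℝ) + 1) ^ ((2 - α) * s) := by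
          gcongr
          exact le_add_of_nonneg_left r.cast_nonneg
      _ ≤ ((s : ℝ) + 1) ^ ((2 - α) * s) := by gcongr
  have hF' (y : V) : |F y| ≤ C * ((G.dist y p : ℝ) + 1) ^ ((2 - α) * G.dist y p) :=
    (hF y).trans (by gcongr; linarith)
  refine (abs_iterate_graphLap_le hconn hμ hω hδ hρ hdeg hF' n x).trans ?_
  set d := G.dist x p
  have hq : ((d + n : ℕ) : ℝ) + 1 = ((n + (d + 1) : ℕ) : ℝ) := by push_cast; ring
  have hq1 : (1 : ℝ) ≤ ((n + (d + 1) : ℕ) : ℝ) := by exact_mod_cast Nat.le_add_left _ _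
  have hexp : α * n + (2 - α) * ((d + n : ℕ) : ℝ) ≤ ((2 * (n + (d + 1)) : ℕ) : ℝ) := by
    push_cast
    nlinarith [mul_nonneg hα0 (Nat.cast_nonneg (α := ℝ) d)]
  rw [hq]
  calc (2 * (K * ((n + (d + 1) : ℕ) : ℝ) ^ α)) ^ n *
        (C * ((n + (d + 1) : ℕ) : ℝ) ^ ((2 - α) * ((d + n : ℕ) : ℝ)))
      = C * (2 * K) ^ n * ((n + (d + 1) : ℕ) : ℝ) ^ (α * n + (2 - α) * ((d + n : ℕ) : ℝ)) := by
        rw [rpow_add (by linarith), rpow_mul_natCast (by linarith) α n]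
        ring
    _ ≤ C * (2 * K) ^ n * ((n + (d + 1) : ℕ) : ℝ) ^ ((2 * (n + (d + 1)) : ℕ) : ℝ) := by
        gcongr
    _ = C * (2 * K) ^ n * ((n + (d + 1) : ℕ) : ℝ) ^ (2 * (n + (d + 1))) := by rw [rpow_natCast]

theorem wDeg_le_max_mul_rpow {p : V} (hμ : 0 < μ p) (hω : ∀ y, G.Adj p y → 0 < ω p y) {D α : ℝ}
    (hα0 : 0 ≤ α) (hdeg : ∀ x, x ≠ p → wDeg G ω μ x ≤ D * (G.dist x p : ℝ) ^ α) (x : V) :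
    wDeg G ω μ x ≤ max D (wDeg G ω μ p) * ((G.dist x p : ℝ) + 1) ^ α := by
  rcases eq_or_ne x p with rfl | hx
  · simp
  · refine (hdeg x hx).trans ?_
    have hK : 0 ≤ max D (wDeg G ω μ p) := (wDeg_nonneg hμ hω).trans (le_max_right _ _)
    gcongr
    · exact le_max_left _ _
    · linarith

variable (G ω μ) in
def IsWaveSolution (I : Set ℝ) (f w w' : ℝ → V → ℝ) : Prop :=
  ∀ x, ∀ t ∈ I, HasDerivAt (fun s => w s x) (w' t x) t ∧
    HasDerivAt (fun s => w' s x) (graphLap G ω μ (w t) x + f t x) t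

theorem isWaveSolution_of_contDiffOn (hI : IsOpen I) {f u : ℝ → V → ℝ}
    (hreg : ∀ x, ContDiffOn ℝ 2 (fun t => u t x) I)
    (hwave : ∀ t ∈ I, ∀ x,
      iteratedDerivWithin 2 (fun s => u s x) I t = graphLap G ω μ (u t) x + f t x) :
    IsWaveSolution G ω μ I f u fun t x => deriv (fun s => u s x) t := fun x t ht => by
  rw [← hwave t ht x]
  exact (hreg x).hasDerivAt_deriv_of_isOpen hI ht

theorem IsWaveSolution.sub {f u u' v v' : ℝ → V → ℝ} (hu : IsWaveSolution G ω μ I f u u')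
    (hv : IsWaveSolution G ω μ I f v v') : IsWaveSolution G ω μ I 0 (u - v) (u' - v') :=
  fun x t ht => by
    obtain ⟨hu₁, hu₂⟩ := hu x t ht
    obtain ⟨hv₁, hv₂⟩ := hv x t ht
    refine ⟨hu₁.sub hv₁, ?_⟩
    exact (hu₂.sub hv₂).congr_deriv <| by
      simp only [Pi.sub_apply, graphLap_sub, Pi.zero_apply]
      ring

theorem IsWaveSolution.comp_neg {w w' : ℝ → V → ℝ} (h : IsWaveSolution G ω μ I 0 w w')
    (hI : ∀ t ∈ I, -t ∈ I) :
    IsWaveSolution G ω μ I 0 (fun t => w (-t)) (fun t => -w' (-t)) := fun x t ht => by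
  obtain ⟨h₁, h₂⟩ := h x (-t) (hI t ht)
  constructor
  · exact (h₁.comp t (hasDerivAt_neg t)).congr_deriv (mul_neg_one _)
  · exact (h₂.comp t (hasDerivAt_neg t)).neg.congr_deriv (by simp)

theorem IsWaveSolution.hasDerivAt_iterate {w w' : ℝ → V → ℝ}
    (h : IsWaveSolution G ω μ I 0 w w') {t : ℝ} (ht : t ∈ I) (n : ℕ) (x : V) :
    HasDerivAt (fun s => (graphLap G ω μ)^[n] (w s) x) ((graphLap G ω μ)^[n] (w' t) x) t ∧
      HasDerivAt (fun s => (graphLap G ω μ)^[n] (w' s) x)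
        ((graphLap G ω μ)^[n + 1] (w t) x) t := by
  refine ⟨hasDerivAt_iterate_graphLap (fun y => (h y t ht).1) n x, ?_⟩
  rw [Function.iterate_succ_apply]
  exact hasDerivAt_iterate_graphLap (fun y => by simpa using (h y t ht).2) n x

theorem IsWaveSolution.eq_zero_on_Icc {w w' : ℝ → V → ℝ} (h : IsWaveSolution G ω μ I 0 w w')
    {a b A R : ℝ} (hab : Icc a b ⊆ I) (hwa : w a = 0) (hw'a : w' a = 0) (hR : 0 ≤ R)
    (hb : R * (exp 1 * (b - a)) ^ 2 ≤ 1) {c : V → ℕ}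
    (hgrowth : ∀ t ∈ Icc a b, ∀ n x,
      |(graphLap G ω μ)^[n] (w t) x| ≤ A * R ^ n * ((n + c x : ℕ) : ℝ) ^ (2 * (n + c x))) :
    ∀ t ∈ Icc a b, w t = 0 := fun t ht => funext fun x =>
  eq_zero_of_hasDerivAt_of_growth (f := fun n s => (graphLap G ω μ)^[n] (w s) x)
    (g := fun n s => (graphLap G ω μ)^[n] (w' s) x)
    (fun k s hs => (h.hasDerivAt_iterate (hab hs) k x).1)
    (fun k s hs => (h.hasDerivAt_iterate (hab hs) k x).2)
    (fun k => by simp [hwa, iterate_graphLap_zero]) (fun k => by simp [hw'a, iterate_graphLap_zero])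
    hR hb (fun n s hs => hgrowth s hs n x) t ht

/-- The local vanishing on intervals of a fixed length `τ` propagates step by step: the data at
the right end of each step vanish again. -/
theorem IsWaveSolution.eq_zero_of_le {w w' : ℝ → V → ℝ} (h : IsWaveSolution G ω μ I 0 w w')
    (hI : I.OrdConnected) {a A R : ℝ} (ha : a ∈ I) (hwa : w a = 0) (hw'a : w' a = 0)
    (hR : 0 ≤ R) {c : V → ℕ}
    (hgrowth : ∀ t ∈ I, ∀ n x,
      |(graphLap G ω μ)^[n] (w t) x| ≤ A * R ^ n * ((n + c x : ℕ) : ℝ) ^ (2 * (n + c x))) :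
    ∀ t ∈ I, a ≤ t → w t = 0 := by
  obtain ⟨τ, hτ, hRτ⟩ : ∃ τ > 0, R * (exp 1 * τ) ^ 2 ≤ 1 := by
    refine ⟨(exp 1 * (R + 1))⁻¹, by positivity, ?_⟩
    rw [mul_inv, ← mul_assoc, mul_inv_cancel₀ (exp_pos 1).ne', one_mul, inv_pow,
      ← div_eq_mul_inv, div_le_one (by positivity)]
    nlinarith
  suffices hstep : ∀ k : ℕ, ∀ t ∈ I, a ≤ t → t ≤ a + k * τ → w t = 0 ∧ w' t = 0 by
    intro t ht hat
    obtain ⟨k, hk⟩ := exists_nat_ge ((t - a) / τ)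
    exact (hstep k t ht hat (by rw [div_le_iff₀ hτ] at hk; linarith)).1
  intro k
  induction k with
  | zero =>
    intro t _ hat hta
    obtain rfl : t = a := by simp at hta; linarith
    exact ⟨hwa, hw'a⟩
  | succ k ih =>
    intro t ht hat htk
    rcases le_or_gt t (a + k * τ) with htk' | htk'
    · exact ih t ht hat htk'
    set a' := a + k * τ with ha'
    have ha'a : a ≤ a' := le_add_of_nonneg_right (by positivity)
    have ha' : a' ∈ I := hI.out ha ht ⟨ha'a, htk'.le⟩
    obtain ⟨hwa', hw'a'⟩ := ih a' ha' ha'a le_rfl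
    have hsub : Icc a' t ⊆ I := hI.out ha' ht
    have hlen : R * (exp 1 * (t - a')) ^ 2 ≤ 1 := by
      refine le_trans ?_ hRτ
      gcongr
      push_cast at htk
      linarith
    have hzero := h.eq_zero_on_Icc hsub hwa' hw'a' hR hlen fun s hs => hgrowth s (hsub hs)
    refine ⟨hzero t (right_mem_Icc.2 htk'.le), funext fun x => ?_⟩
    exact ((h x t ht).1).eq_zero_of_eqOn_Icc htk' fun s hs => congrFun (hzero s hs) x

theorem IsWaveSolution.eq_zero {w w' : ℝ → V → ℝ} (h : IsWaveSolution G ω μ I 0 w w')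
    (hI : I.OrdConnected) (hneg : ∀ t ∈ I, -t ∈ I) {A R : ℝ} (h0 : (0 : ℝ) ∈ I) (hw0 : w 0 = 0)
    (hw'0 : w' 0 = 0) (hR : 0 ≤ R) {c : V → ℕ}
    (hgrowth : ∀ t ∈ I, ∀ n x,
      |(graphLap G ω μ)^[n] (w t) x| ≤ A * R ^ n * ((n + c x : ℕ) : ℝ) ^ (2 * (n + c x))) :
    ∀ t ∈ I, w t = 0 := by
  intro t ht
  rcases le_total 0 t with ht0 | ht0
  · exact h.eq_zero_of_le hI h0 hw0 hw'0 hR hgrowth t ht ht0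
  · have hrefl := (h.comp_neg hneg).eq_zero_of_le hI h0 (by simpa only [neg_zero] using hw0)
      (by simpa only [neg_zero, neg_eq_zero] using hw'0) hR
      (fun s hs => hgrowth (-s) (hneg s hs)) (-t) (hneg t ht) (neg_nonneg.2 ht0)
    simpa using hrefl

end WaveEquation

theorem EReal.neg_coe_mem_Ioo_neg {T : EReal} {t : ℝ} (ht : (t : EReal) ∈ Ioo (-T) T) :
    ((-t : ℝ) : EReal) ∈ Ioo (-T) T := by
  rw [mem_Ioo, EReal.coe_neg, EReal.neg_lt_neg_iff, EReal.neg_lt_comm]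
  exact ht.symm

theorem wave_uniqueness_class_general {V : Type*} (G : SimpleGraph V)
    [∀ v, Fintype (G.neighborSet v)]
    (hconn : G.Connected)
    (ω : V → V → ℝ) (μ : V → ℝ)
    (hμ : ∀ x, 0 < μ x)
    (hω : ∀ x y, G.Adj x y → 0 < ω x y)
    (p : V) (D α : ℝ) (hα0 : 0 ≤ α) (hα2 : α ≤ 2)
    (hdeg : ∀ x : V, x ≠ p → wDeg G ω μ x ≤ D * (G.dist x p : ℝ) ^ α)
    (T : EReal) (hT : 0 < T)
    (f : ℝ → V → ℝ) (g h : V → ℝ)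
    (u v : ℝ → V → ℝ)
    (hregu : ∀ x : V,
      ContDiffOn ℝ 2 (fun t => u t x) {t : ℝ | -T < (t : EReal) ∧ (t : EReal) < T})
    (hregv : ∀ x : V,
      ContDiffOn ℝ 2 (fun t => v t x) {t : ℝ | -T < (t : EReal) ∧ (t : EReal) < T})
    (hwaveu : ∀ t : ℝ, -T < (t : EReal) → (t : EReal) < T → ∀ x : V,
      iteratedDerivWithin 2 (fun s => u s x)
          {t : ℝ | -T < (t : EReal) ∧ (t : EReal) < T} t
        = graphLap G ω μ (u t) x + f t x)
    (hwavev : ∀ t : ℝ, -T < (t : EReal) → (t : EReal) < T → ∀ x : V,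
      iteratedDerivWithin 2 (fun s => v s x)
          {t : ℝ | -T < (t : EReal) ∧ (t : EReal) < T} t
        = graphLap G ω μ (v t) x + f t x)
    (hinitu : ∀ x : V, u 0 x = g x) (hinitv : ∀ x : V, v 0 x = g x)
    (hinitu' : ∀ x : V, derivWithin (fun s => u s x)
        {t : ℝ | -T < (t : EReal) ∧ (t : EReal) < T} 0 = h x)
    (hinitv' : ∀ x : V, derivWithin (fun s => v s x)
        {t : ℝ | -T < (t : EReal) ∧ (t : EReal) < T} 0 = h x)
    (Cu Cv : ℝ)
    (hgrowthu : ∀ t : ℝ, -T < (t : EReal) → (t : EReal) < T → ∀ x : V,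
      |u t x| ≤ Cu * (G.dist x p : ℝ) ^ ((2 - α) * (G.dist x p : ℝ)))
    (hgrowthv : ∀ t : ℝ, -T < (t : EReal) → (t : EReal) < T → ∀ x : V,
      |v t x| ≤ Cv * (G.dist x p : ℝ) ^ ((2 - α) * (G.dist x p : ℝ))) :
    ∀ t : ℝ, -T < (t : EReal) → (t : EReal) < T → ∀ x : V, u t x = v t x := by
  set S := {t : ℝ | -T < (t : EReal) ∧ (t : EReal) < T}
  have hSo : IsOpen S := isOpen_Ioo.preimage continuous_coe_real_ereal
  have hSc : S.OrdConnected := ordConnected_Ioo.preimage_mono EReal.coe_strictMono.monotone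
  have h0 : (0 : ℝ) ∈ S := ⟨by simpa using EReal.neg_lt_neg_iff.2 hT, by simpa using hT⟩
  have hsol := (isWaveSolution_of_contDiffOn hSo hregu fun t ht => hwaveu t ht.1 ht.2).sub
    (isWaveSolution_of_contDiffOn hSo hregv fun t ht => hwavev t ht.1 ht.2)
  have hw0 : (u - v) 0 = 0 := funext fun x => by simp [hinitu, hinitv]
  have hw'0 : ((fun t x => deriv (u · x) t) - fun t x => deriv (v · x) t) 0 = 0 :=
    funext fun x => by simp [← derivWithin_of_isOpen hSo h0, hinitu', hinitv']
  have hR : 0 ≤ 2 * max D (wDeg G ω μ p) :=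
    mul_nonneg zero_le_two ((wDeg_nonneg (hμ p) (hω p)).trans (le_max_right _ _))
  have hgrowth (t : ℝ) (ht : t ∈ S) := abs_iterate_graphLap_le_of_rpow_growth hconn hμ hω hα0 hα2
    (wDeg_le_max_mul_rpow (hμ p) (hω p) hα0 hdeg) (F := (u - v) t) fun y =>
      (abs_sub _ _).trans <| (add_le_add (hgrowthu t ht.1 ht.2 y) (hgrowthv t ht.1 ht.2 y)).trans_eq
        (add_mul _ _ _).symm
  intro t ht₁ ht₂ x
  exact sub_eq_zero.1 <| congrFun (hsol.eq_zero hSc (fun s => EReal.neg_coe_mem_Ioo_neg) h0 hw0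
    hw'0 hR hgrowth t ⟨ht₁, ht₂⟩) x

/-- uniqueness class for the wave equation on graphs. Under
`Deg(x) ≤ D·d(x,p)^α`, two solutions `u, v` of `∂_t² w = Δw + f` on `(−T,T) × V`
(`T ∈ (0,∞]` encoded as `T : EReal`) with the same data `f, g, h` which both satisfy
`|w(t,x)| ≤ C·d(x,p)^{(2−α)·d(x,p)}` (with possibly different constants, the bound
reading `C` at `x = p` since `0^0 = 1` for `Real.rpow`) coincide. -/
theorem wave_uniqueness_class {V : Type*} (G : SimpleGraph V)
    [∀ v, Fintype (G.neighborSet v)]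
    (hconn : G.Connected)
    (ω : V → V → ℝ) (μ : V → ℝ)
    (hμ : ∀ x, 0 < μ x)
    (hω : ∀ x y, G.Adj x y → 0 < ω x y)
    (hsymm : ∀ x y, ω x y = ω y x)
    (p : V) (D α : ℝ) (hD : 0 < D) (hα0 : 0 ≤ α) (hα2 : α ≤ 2)
    (hdeg : ∀ x : V, x ≠ p → wDeg G ω μ x ≤ D * (G.dist x p : ℝ) ^ α)
    (T : EReal) (hT : 0 < T)
    (f : ℝ → V → ℝ) (g h : V → ℝ)
    (u v : ℝ → V → ℝ)
    (hregu : ∀ x : V,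
      ContDiffOn ℝ 2 (fun t => u t x) {t : ℝ | -T < (t : EReal) ∧ (t : EReal) < T})
    (hregv : ∀ x : V,
      ContDiffOn ℝ 2 (fun t => v t x) {t : ℝ | -T < (t : EReal) ∧ (t : EReal) < T})
    (hwaveu : ∀ t : ℝ, -T < (t : EReal) → (t : EReal) < T → ∀ x : V,
      iteratedDerivWithin 2 (fun s => u s x)
          {t : ℝ | -T < (t : EReal) ∧ (t : EReal) < T} t
        = graphLap G ω μ (u t) x + f t x)
    (hwavev : ∀ t : ℝ, -T < (t : EReal) → (t : EReal) < T → ∀ x : V,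
      iteratedDerivWithin 2 (fun s => v s x)
          {t : ℝ | -T < (t : EReal) ∧ (t : EReal) < T} t
        = graphLap G ω μ (v t) x + f t x)
    (hinitu : ∀ x : V, u 0 x = g x) (hinitv : ∀ x : V, v 0 x = g x)
    (hinitu' : ∀ x : V, derivWithin (fun s => u s x)
        {t : ℝ | -T < (t : EReal) ∧ (t : EReal) < T} 0 = h x)
    (hinitv' : ∀ x : V, derivWithin (fun s => v s x)
        {t : ℝ | -T < (t : EReal) ∧ (t : EReal) < T} 0 = h x)
    (Cu Cv : ℝ)
    (hgrowthu : ∀ t : ℝ, -T < (t : EReal) → (t : EReal) < T → ∀ x : V,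
      |u t x| ≤ Cu * (G.dist x p : ℝ) ^ ((2 - α) * (G.dist x p : ℝ)))
    (hgrowthv : ∀ t : ℝ, -T < (t : EReal) → (t : EReal) < T → ∀ x : V,
      |v t x| ≤ Cv * (G.dist x p : ℝ) ^ ((2 - α) * (G.dist x p : ℝ))) :
    ∀ t : ℝ, -T < (t : EReal) → (t : EReal) < T → ∀ x : V, u t x = v t x :=
  wave_uniqueness_class_general G hconn ω μ hμ hω p D α hα0 hα2 hdeg T hT f g h u v hregu hregv
    hwaveu hwavev hinitu hinitv hinitu' hinitv' Cu Cv hgrowthu hgrowthv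
end
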